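/- arXiv:1404.7455 — 8 statements merged into one kernel-verified Lean document; each statement's English description precedes it below -/
import Mathlib

section
/- Let τ1, τ2 : [0,1] → [0,1] be Borel measurable maps and let f1, f2 be densities such that the measure f1·λ_Leb is invariant under τ1 and f2·λ_Leb is invariant under τ2 (i.e. (f_k·λ_Leb)(τ_k⁻¹(A)) = (f_k·λ_Leb)(A) for every Borel set A). Let c ∈ (0,1), set f = c·f1 + (1−c)·f2, and define p : [0,1] → [0,1] by p(x) = c·f1(x)/f(x) when f(x) > 0 and p(x) = 0 when f(x) = 0. Then the density f is invariant under the position-dependent random map R = {τ1, τ2; p, 1−p}. -/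
open MeasureTheory Set Filter
open scoped ENNReal

/-- Lebesgue measure restricted to the unit interval `[0,1]`. -/
noncomputable def leb01 : Measure ℝ := volume.restrict (Set.Icc (0:ℝ) 1)

/-- The measure `f · λ_Leb` with density `f` with respect to Lebesgue measure on `[0,1]`. -/
noncomputable def densMeasure (f : ℝ → ℝ) : Measure ℝ :=
  leb01.withDensity (fun x => ENNReal.ofReal (f x))

/-- `f` is a probability density on `[0,1]`. -/
def IsDensity (f : ℝ → ℝ) : Prop :=
  Measurable f ∧ (∀ x, 0 ≤ f x) ∧ (∫ x in Set.Icc (0:ℝ) 1, f x = 1)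

/-- Invariance of a measure `μ` under the position dependent random map
`R = {τ1, τ2; p, 1-p}`. -/
def RMInvariant (τ1 τ2 p : ℝ → ℝ) (μ : Measure ℝ) : Prop :=
  ∀ A : Set ℝ, MeasurableSet A →
    μ A = ∫⁻ x, (ENNReal.ofReal (p x) * A.indicator (fun _ => (1:ℝ≥0∞)) (τ1 x)
      + ENNReal.ofReal (1 - p x) * A.indicator (fun _ => (1:ℝ≥0∞)) (τ2 x)) ∂μ

/-!
The point is that the two branches of the random map carry the invariant measures separately:
with `μ = f · λ_Leb`, the weighted measures `p · μ` and `(1 - p) · μ` are `c · (f₁ · λ_Leb)` and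
`(1 - c) · (f₂ · λ_Leb)`, since `f p = c f₁` and `f (1 - p) = (1 - c) f₂` everywhere (where `f = 0`
both `f₁` and `f₂` vanish). Each part is invariant under its own map and the two parts add up
to `μ`, which is exactly invariance of `μ` under `R`.
-/

lemma mul_ite_div_add_self {K : Type*} [Field K] [LinearOrder K] [IsStrictOrderedRing K]
    {a b : K} (ha : 0 ≤ a) (hb : 0 ≤ b) :
    (a + b) * (if 0 < a + b then a / (a + b) else 0) = a := by
  split_ifs
  · field_simp
  · linarith

lemma mul_one_sub_ite_div_add_self {K : Type*} [Field K] [LinearOrder K]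
    [IsStrictOrderedRing K] {a b : K} (ha : 0 ≤ a) (hb : 0 ≤ b) :
    (a + b) * (1 - if 0 < a + b then a / (a + b) else 0) = b := by
  rw [mul_sub, mul_ite_div_add_self ha hb]
  ring

lemma lintegral_mul_indicator_comp {α β : Type*} [MeasurableSpace α] [MeasurableSpace β]
    {μ : Measure α} {q : α → ℝ≥0∞} {τ : α → β} (hτ : Measurable τ) {A : Set β}
    (hA : MeasurableSet A) :
    ∫⁻ x, q x * A.indicator (fun _ => (1 : ℝ≥0∞)) (τ x) ∂μ = μ.withDensity q (τ ⁻¹' A) := by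
  rw [withDensity_apply _ (hτ hA), ← lintegral_indicator (hτ hA)]
  refine lintegral_congr fun x => ?_
  by_cases hx : τ x ∈ A <;> simp [hx]

theorem rmInvariant_of_withDensity_invariant {τ1 τ2 p : ℝ → ℝ} {μ : Measure ℝ}
    (hτ1 : Measurable τ1) (hτ2 : Measurable τ2) (hp : Measurable p)
    (hsum : μ.withDensity (fun x => ENNReal.ofReal (p x))
      + μ.withDensity (fun x => ENNReal.ofReal (1 - p x)) = μ)
    (hinv1 : ∀ A : Set ℝ, MeasurableSet A →
      μ.withDensity (fun x => ENNReal.ofReal (p x)) (τ1 ⁻¹' A)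
        = μ.withDensity (fun x => ENNReal.ofReal (p x)) A)
    (hinv2 : ∀ A : Set ℝ, MeasurableSet A →
      μ.withDensity (fun x => ENNReal.ofReal (1 - p x)) (τ2 ⁻¹' A)
        = μ.withDensity (fun x => ENNReal.ofReal (1 - p x)) A) :
    RMInvariant τ1 τ2 p μ := by
  intro A hA
  have hmeas : Measurable fun x => ENNReal.ofReal (p x) * A.indicator (fun _ => 1) (τ1 x) :=
    hp.ennreal_ofReal.mul ((measurable_const.indicator hA).comp hτ1)
  rw [lintegral_add_left hmeas, lintegral_mul_indicator_comp hτ1 hA,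
    lintegral_mul_indicator_comp hτ2 hA, hinv1 A hA, hinv2 A hA, ← Measure.add_apply, hsum]

section densMeasure

variable {f g : ℝ → ℝ}

lemma densMeasure_add (hf : Measurable f) (hf0 : 0 ≤ f) (hg0 : 0 ≤ g) :
    densMeasure (fun x => f x + g x) = densMeasure f + densMeasure g := by
  rw [densMeasure, densMeasure, densMeasure, ← withDensity_add_left hf.ennreal_ofReal]
  congr 1
  funext x
  exact ENNReal.ofReal_add (hf0 x) (hg0 x)

lemma densMeasure_const_mul (hf : Measurable f) {c : ℝ} (hc : 0 ≤ c) :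
    densMeasure (fun x => c * f x) = ENNReal.ofReal c • densMeasure f := by
  rw [densMeasure, densMeasure, ← withDensity_smul _ hf.ennreal_ofReal]
  congr 1
  funext x
  exact ENNReal.ofReal_mul hc

lemma withDensity_densMeasure (hf : Measurable f) (hg : Measurable g) (hf0 : 0 ≤ f) :
    (densMeasure f).withDensity (fun x => ENNReal.ofReal (g x))
      = densMeasure (fun x => f x * g x) := by
  rw [densMeasure, densMeasure, ← withDensity_mul _ hf.ennreal_ofReal hg.ennreal_ofReal]
  congr 1
  funext x
  exact (ENNReal.ofReal_mul (hf0 x)).symm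

end densMeasure

lemma smul_measure_preimage_eq {α : Type*} [MeasurableSpace α] {ν : Measure α} {τ : α → α}
    (r : ℝ≥0∞) (hinv : ∀ A : Set α, MeasurableSet A → ν (τ ⁻¹' A) = ν A) :
    ∀ A : Set α, MeasurableSet A → (r • ν) (τ ⁻¹' A) = (r • ν) A := fun A hA => by
  rw [Measure.smul_apply, Measure.smul_apply, hinv A hA]

theorem convex_combination_invariant_for_random_map_general
    (τ1 τ2 : ℝ → ℝ) (hτ1 : Measurable τ1) (hτ2 : Measurable τ2)
    (f1 f2 : ℝ → ℝ) (hf1 : IsDensity f1) (hf2 : IsDensity f2)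
    (hinv1 : ∀ A : Set ℝ, MeasurableSet A → densMeasure f1 (τ1 ⁻¹' A) = densMeasure f1 A)
    (hinv2 : ∀ A : Set ℝ, MeasurableSet A → densMeasure f2 (τ2 ⁻¹' A) = densMeasure f2 A)
    (c : ℝ) (hc : c ∈ Set.Ioo (0:ℝ) 1)
    (f : ℝ → ℝ) (hf : f = fun x => c * f1 x + (1 - c) * f2 x)
    (p : ℝ → ℝ) (hp : p = fun x => if 0 < f x then c * f1 x / f x else 0) :
    RMInvariant τ1 τ2 p (densMeasure f) := by
  obtain ⟨hf1m, hf1nn, -⟩ := hf1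
  obtain ⟨hf2m, hf2nn, -⟩ := hf2
  have hc0 : 0 ≤ c := hc.1.le
  have hc1 : 0 ≤ 1 - c := by linarith [hc.2]
  have hcf1 : 0 ≤ fun x => c * f1 x := fun x => mul_nonneg hc0 (hf1nn x)
  have hcf2 : 0 ≤ fun x => (1 - c) * f2 x := fun x => mul_nonneg hc1 (hf2nn x)
  have hfnn : 0 ≤ f := fun x => by rw [hf]; exact add_nonneg (hcf1 x) (hcf2 x)
  have hfm : Measurable f := hf ▸ (hf1m.const_mul c).add (hf2m.const_mul (1 - c))
  have hpm : Measurable p :=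
    hp ▸ Measurable.ite (measurableSet_lt measurable_const hfm) ((hf1m.const_mul c).div hfm)
      measurable_const
  have hpart1 : (densMeasure f).withDensity (fun x => ENNReal.ofReal (p x))
      = ENNReal.ofReal c • densMeasure f1 := by
    rw [withDensity_densMeasure hfm hpm hfnn, ← densMeasure_const_mul hf1m hc0]
    simp only [hf, hp, mul_ite_div_add_self (hcf1 _) (hcf2 _)]
  have hpart2 : (densMeasure f).withDensity (fun x => ENNReal.ofReal (1 - p x))
      = ENNReal.ofReal (1 - c) • densMeasure f2 := by
    rw [withDensity_densMeasure hfm (hpm.const_sub 1) hfnn,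
      ← densMeasure_const_mul hf2m hc1]
    simp only [hf, hp, mul_one_sub_ite_div_add_self (hcf1 _) (hcf2 _)]
  refine rmInvariant_of_withDensity_invariant hτ1 hτ2 hpm ?_ ?_ ?_
  · rw [hpart1, hpart2, ← densMeasure_const_mul hf1m hc0, ← densMeasure_const_mul hf2m hc1,
      ← densMeasure_add (hf1m.const_mul c) hcf1 hcf2, hf]
  · simpa only [hpart1] using smul_measure_preimage_eq _ hinv1
  · simpa only [hpart2] using smul_measure_preimage_eq _ hinv2

/-- If `f₁` is an invariant density of `τ1` and `f₂` an invariant density of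
`τ2`, then for `c ∈ (0,1)` the convex combination `f = c f₁ + (1-c) f₂` is an invariant
density of the position dependent random map `R = {τ1, τ2; p, 1-p}` with
`p = c f₁ / f` (set to `0` where `f = 0`). -/
theorem convex_combination_invariant_for_random_map
    (τ1 τ2 : ℝ → ℝ) (hτ1 : Measurable τ1) (hτ2 : Measurable τ2)
    (hτ1m : MapsTo τ1 (Set.Icc (0:ℝ) 1) (Set.Icc (0:ℝ) 1))
    (hτ2m : MapsTo τ2 (Set.Icc (0:ℝ) 1) (Set.Icc (0:ℝ) 1))
    (f1 f2 : ℝ → ℝ) (hf1 : IsDensity f1) (hf2 : IsDensity f2)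
    (hinv1 : ∀ A : Set ℝ, MeasurableSet A → densMeasure f1 (τ1 ⁻¹' A) = densMeasure f1 A)
    (hinv2 : ∀ A : Set ℝ, MeasurableSet A → densMeasure f2 (τ2 ⁻¹' A) = densMeasure f2 A)
    (c : ℝ) (hc : c ∈ Set.Ioo (0:ℝ) 1)
    (f : ℝ → ℝ) (hf : f = fun x => c * f1 x + (1 - c) * f2 x)
    (p : ℝ → ℝ) (hp : p = fun x => if 0 < f x then c * f1 x / f x else 0) :
    RMInvariant τ1 τ2 p (densMeasure f) :=
  convex_combination_invariant_for_random_map_general τ1 τ2 hτ1 hτ2 f1 f2 hf1 hf2 hinv1 hinv2 c hc f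
    hf p hp
end

section
/- There exists exactly one function p : [0,a) → ℝ that is bounded on [0,â] and satisfies the functional equation p(x) = p(τ21(x))·τ21′(x) + B(x) for all x ∈ [0,a). Moreover, for every x ∈ [0,a) the series Σ_{n=0}^∞ B(τ21^{∘n}(x)) · Π_{k=0}^{n−1} τ21′(τ21^{∘k}(x)) converges and its sum equals p(x), and the convergence is uniform on [0,s] for every s ∈ (0,a). -/
/-!
Iterating the equation `p x = p (τ x) * τ' x + B x` along the orbit of `x` produces the partial
sums of the series plus the remainder `p (τ^[n] x) * ∏_{k<n} τ' (τ^[k] x)`. Orbits of `τ` decrease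
to `0`, uniformly enough that after some `N` the whole of `τ^[N] [0, s]` lies in `[0, â]`; from
then on the products decay like `σ ^ n`. This dominates the series on `[0, s]` by a geometric one
and makes the remainder of any bounded solution vanish, which gives uniqueness.
-/

open Set Filter Topology

section OrbitProd

variable {α M : Type*} [CommMonoid M] (f : α → α) (g : α → M)

def orbitProd (n : ℕ) (x : α) : M :=
  ∏ k ∈ Finset.range n, g (f^[k] x)

@[simp]
theorem orbitProd_zero (x : α) : orbitProd f g 0 x = 1 :=
  Finset.prod_range_zero _

theorem orbitProd_succ' (n : ℕ) (x : α) :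
    orbitProd f g (n + 1) x = g x * orbitProd f g n (f x) := by
  simp only [orbitProd, Finset.prod_range_succ', Function.iterate_succ_apply,
    Function.iterate_zero_apply]
  exact mul_comm _ _

theorem orbitProd_add (m n : ℕ) (x : α) :
    orbitProd f g (m + n) x = orbitProd f g m x * orbitProd f g n (f^[m] x) := by
  rw [orbitProd, Finset.prod_range_add]
  congr 1
  exact Finset.prod_congr rfl fun k _ => by rw [add_comm, Function.iterate_add_apply]

theorem eq_mul_orbitProd_of_mapsTo {s : Set α} (hs : MapsTo f s s) {h : α → M}
    (hh : ∀ y ∈ s, h y = h (f y) * g y) (n : ℕ) :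
    ∀ x ∈ s, h x = h (f^[n] x) * orbitProd f g n x := by
  induction n with
  | zero => simp
  | succ n ih =>
    intro x hx
    rw [hh x hx, ih (f x) (hs hx), orbitProd_succ', Function.iterate_succ_apply]
    ac_rfl

end OrbitProd

section OrbitProdBounds

variable {α : Type*} {f : α → α} {g : α → ℝ} {s t : Set α} {x : α}

theorem abs_orbitProd_le_pow {c : ℝ} (hs : MapsTo f s s) (hg : ∀ y ∈ s, |g y| ≤ c)
    (hx : x ∈ s) (n : ℕ) : |orbitProd f g n x| ≤ c ^ n := by
  rw [orbitProd, Finset.abs_prod]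
  refine (Finset.prod_le_prod (s := Finset.range n) (fun k _ => abs_nonneg _)
    fun k _ => hg _ (hs.iterate k hx)).trans_eq ?_
  rw [Finset.prod_const, Finset.card_range]

theorem abs_orbitProd_le {K σ : ℝ} {N : ℕ} (hs : MapsTo f s s) (ht : MapsTo f t t)
    (hK : ∀ y ∈ s, |g y| ≤ K) (hσ : ∀ y ∈ t, |g y| ≤ σ) (hK1 : 1 ≤ K)
    (hx : x ∈ s) (hNx : f^[N] x ∈ t) (n : ℕ) :
    |orbitProd f g n x| ≤ K ^ N * σ ^ (n - N) := by
  rcases le_or_gt n N with hn | hn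
  · rw [Nat.sub_eq_zero_of_le hn, pow_zero, mul_one]
    exact (abs_orbitProd_le_pow hs hK hx n).trans (pow_le_pow_right₀ hK1 hn)
  · obtain ⟨m, rfl⟩ := Nat.exists_eq_add_of_le hn.le
    rw [orbitProd_add, abs_mul, Nat.add_sub_cancel_left]
    exact mul_le_mul (abs_orbitProd_le_pow hs hK hx N) (abs_orbitProd_le_pow ht hσ hNx m)
      (abs_nonneg _) (pow_nonneg (zero_le_one.trans hK1) N)

end OrbitProdBounds

section TwistedSeries

variable {α R : Type*} [CommSemiring R] (f : α → α) (g B : α → R)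

def twistedTerm (n : ℕ) (x : α) : R :=
  B (f^[n] x) * orbitProd f g n x

noncomputable def twistedSum [TopologicalSpace R] (x : α) : R :=
  ∑' n, twistedTerm f g B n x

theorem twistedTerm_zero (x : α) : twistedTerm f g B 0 x = B x := by
  simp [twistedTerm]

theorem twistedTerm_succ (n : ℕ) (x : α) :
    twistedTerm f g B (n + 1) x = twistedTerm f g B n (f x) * g x := by
  rw [twistedTerm, twistedTerm, orbitProd_succ', Function.iterate_succ_apply]
  ring

variable {f g B} [TopologicalSpace R] [IsTopologicalSemiring R]

theorem hasSum_twistedTerm_of_hasSum_apply {x : α} {S : R}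
    (h : HasSum (fun n => twistedTerm f g B n (f x)) S) :
    HasSum (fun n => twistedTerm f g B n x) (S * g x + B x) := by
  have hshift : HasSum (fun n => twistedTerm f g B (n + 1) x) (S * g x) := by
    simpa only [twistedTerm_succ] using h.mul_right (g x)
  rw [add_comm, ← twistedTerm_zero f g B x]
  exact HasSum.zero_add (f := fun n => twistedTerm f g B n x) hshift

end TwistedSeries

structure AttractsToZero (f : ℝ → ℝ) (a : ℝ) : Prop where
  monotoneOn : MonotoneOn f (Ico 0 a)
  map_zero : f 0 = 0
  lt_self : ∀ y ∈ Ioo 0 a, f y < y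
  continuousAt : ∀ y ∈ Ico 0 a, ContinuousAt f y

namespace AttractsToZero

variable {f : ℝ → ℝ} {a : ℝ}

theorem apply_le_self (hf : AttractsToZero f a) {y : ℝ} (hy : y ∈ Ico 0 a) : f y ≤ y := by
  rcases hy.1.eq_or_lt with rfl | hpos
  · exact hf.map_zero.le
  · exact (hf.lt_self y ⟨hpos, hy.2⟩).le

theorem apply_nonneg (hf : AttractsToZero f a) {y : ℝ} (hy : y ∈ Ico 0 a) : 0 ≤ f y :=
  hf.map_zero ▸ hf.monotoneOn ⟨le_rfl, hy.1.trans_lt hy.2⟩ hy hy.1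

theorem mapsTo_Ico (hf : AttractsToZero f a) : MapsTo f (Ico 0 a) (Ico 0 a) :=
  fun _ hy => ⟨hf.apply_nonneg hy, (hf.apply_le_self hy).trans_lt hy.2⟩

theorem mapsTo_Icc (hf : AttractsToZero f a) {b : ℝ} (hb : b < a) :
    MapsTo f (Icc 0 b) (Icc 0 b) := fun y hy =>
  have hy' : y ∈ Ico 0 a := ⟨hy.1, hy.2.trans_lt hb⟩
  ⟨hf.apply_nonneg hy', (hf.apply_le_self hy').trans hy.2⟩

theorem monotoneOn_iterate (hf : AttractsToZero f a) (n : ℕ) : MonotoneOn f^[n] (Ico 0 a) := by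
  induction n with
  | zero => exact monotone_id.monotoneOn _
  | succ n ih => exact ih.comp hf.monotoneOn hf.mapsTo_Ico

/-- The orbit decreases to a fixed point of `f`, and `0` is the only one. -/
theorem tendsto_iterate (hf : AttractsToZero f a) {x : ℝ} (hx : x ∈ Ico 0 a) :
    Tendsto (fun n => f^[n] x) atTop (𝓝 0) := by
  have horbit : ∀ n, f^[n] x ∈ Ico 0 a := fun n => hf.mapsTo_Ico.iterate n hx
  have hanti : Antitone fun n => f^[n] x := antitone_nat_of_succ_le fun n => by
    rw [Function.iterate_succ_apply']
    exact hf.apply_le_self (horbit n)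
  have hbdd : BddBelow (range fun n => f^[n] x) :=
    ⟨0, forall_mem_range.2 fun n => (horbit n).1⟩
  have hlim := tendsto_atTop_ciInf hanti hbdd
  have hL : ⨅ n, f^[n] x ∈ Ico 0 a :=
    ⟨le_ciInf fun n => (horbit n).1, (ciInf_le hbdd 0).trans_lt hx.2⟩
  have hfix := isFixedPt_of_tendsto_iterate hlim (hf.continuousAt _ hL)
  rcases hL.1.eq_or_lt with hL0 | hLpos
  · rwa [← hL0] at hlim
  · exact absurd hfix (hf.lt_self _ ⟨hLpos, hL.2⟩).ne

theorem exists_mapsTo_iterate_Icc (hf : AttractsToZero f a) {s ε : ℝ} (hs : s ∈ Ico 0 a)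
    (hε : 0 < ε) : ∃ N, MapsTo f^[N] (Icc 0 s) (Icc 0 ε) := by
  obtain ⟨N, hN⟩ := ((hf.tendsto_iterate hs).eventually_lt_const hε).exists
  refine ⟨N, fun x hx => ?_⟩
  have hx' : x ∈ Ico 0 a := ⟨hx.1, hx.2.trans_lt hs.2⟩
  exact ⟨(hf.mapsTo_Ico.iterate N hx').1, (hf.monotoneOn_iterate N hx' hs hx.2).trans hN.le⟩

end AttractsToZero

section TwistedEquation

variable {f g B : ℝ → ℝ} {a ahat σ s : ℝ}

theorem summable_mul_pow_sub (hσ : σ ∈ Ico 0 1) (D : ℝ) (N : ℕ) :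
    Summable fun n => D * σ ^ (n - N) :=
  (summable_nat_add_iff N).mp <| by
    simpa using (summable_geometric_of_lt_one hσ.1 hσ.2).mul_left D

theorem exists_abs_orbitProd_le (hf : AttractsToZero f a) (hg : ContinuousOn g (Ico 0 a))
    (hgσ : ∀ y ∈ Icc 0 ahat, |g y| ≤ σ) (hahat : ahat < a) (hs : s < a) {N : ℕ}
    (hN : MapsTo f^[N] (Icc 0 s) (Icc 0 ahat)) :
    ∃ K, ∀ x ∈ Icc 0 s, ∀ n, |orbitProd f g n x| ≤ K ^ N * σ ^ (n - N) := by
  obtain ⟨K, hK⟩ :=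
    isCompact_Icc.exists_bound_of_continuousOn (hg.mono (Icc_subset_Ico_right hs))
  exact ⟨max 1 K, fun x hx => abs_orbitProd_le (hf.mapsTo_Icc hs) (hf.mapsTo_Icc hahat)
    (fun y hy => (hK y hy).trans (le_max_right _ _)) hgσ (le_max_left _ _) hx (hN hx)⟩

theorem exists_abs_twistedTerm_le (hf : AttractsToZero f a) (hg : ContinuousOn g (Ico 0 a))
    (hB : ContinuousOn B (Ico 0 a)) (hgσ : ∀ y ∈ Icc 0 ahat, |g y| ≤ σ) (hahat : ahat ∈ Ioo 0 a)
    (hs : s ∈ Ico 0 a) :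
    ∃ D : ℝ, ∃ N : ℕ, ∀ n, ∀ x ∈ Icc 0 s, |twistedTerm f g B n x| ≤ D * σ ^ (n - N) := by
  obtain ⟨N, hN⟩ := hf.exists_mapsTo_iterate_Icc hs hahat.1
  obtain ⟨K, hK⟩ := exists_abs_orbitProd_le hf hg hgσ hahat.2 hs.2 hN
  obtain ⟨C, hC⟩ := isCompact_Icc.exists_bound_of_continuousOn (hB.mono (Icc_subset_Ico_right hs.2))
  refine ⟨C * K ^ N, N, fun n x hx => ?_⟩
  rw [twistedTerm, abs_mul, mul_assoc]
  exact mul_le_mul (hC _ ((hf.mapsTo_Icc hs.2).iterate n hx)) (hK x hx n) (abs_nonneg _)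
    ((norm_nonneg _).trans (hC 0 ⟨le_rfl, hs.1⟩))

theorem hasSum_twistedSum (hf : AttractsToZero f a) (hg : ContinuousOn g (Ico 0 a))
    (hB : ContinuousOn B (Ico 0 a)) (hgσ : ∀ y ∈ Icc 0 ahat, |g y| ≤ σ) (hahat : ahat ∈ Ioo 0 a)
    (hσ : σ ∈ Ico 0 1) {x : ℝ} (hx : x ∈ Ico 0 a) :
    HasSum (fun n => twistedTerm f g B n x) (twistedSum f g B x) := by
  obtain ⟨D, N, hD⟩ := exists_abs_twistedTerm_le hf hg hB hgσ hahat hx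
  exact (Summable.of_norm_bounded (summable_mul_pow_sub hσ D N)
    fun n => hD n x ⟨hx.1, le_rfl⟩).hasSum

theorem tendstoUniformlyOn_twistedSum (hf : AttractsToZero f a) (hg : ContinuousOn g (Ico 0 a))
    (hB : ContinuousOn B (Ico 0 a)) (hgσ : ∀ y ∈ Icc 0 ahat, |g y| ≤ σ) (hahat : ahat ∈ Ioo 0 a)
    (hσ : σ ∈ Ico 0 1) (hs : s ∈ Ico 0 a) :
    TendstoUniformlyOn (fun m x => ∑ n ∈ Finset.range m, twistedTerm f g B n x)
      (twistedSum f g B) atTop (Icc 0 s) := by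
  obtain ⟨D, N, hD⟩ := exists_abs_twistedTerm_le hf hg hB hgσ hahat hs
  exact tendstoUniformlyOn_tsum_nat (summable_mul_pow_sub hσ D N) hD

theorem exists_abs_twistedSum_le (hf : AttractsToZero f a) (hg : ContinuousOn g (Ico 0 a))
    (hB : ContinuousOn B (Ico 0 a)) (hgσ : ∀ y ∈ Icc 0 ahat, |g y| ≤ σ) (hahat : ahat ∈ Ioo 0 a)
    (hσ : σ ∈ Ico 0 1) (hs : s ∈ Ico 0 a) :
    ∃ M, ∀ x ∈ Icc 0 s, |twistedSum f g B x| ≤ M := by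
  obtain ⟨D, N, hD⟩ := exists_abs_twistedTerm_le hf hg hB hgσ hahat hs
  exact ⟨_, fun x hx => tsum_of_norm_bounded (f := fun n => twistedTerm f g B n x)
    (summable_mul_pow_sub hσ D N).hasSum (hD · x hx)⟩

theorem twistedSum_eq (hf : AttractsToZero f a) (hg : ContinuousOn g (Ico 0 a))
    (hB : ContinuousOn B (Ico 0 a)) (hgσ : ∀ y ∈ Icc 0 ahat, |g y| ≤ σ) (hahat : ahat ∈ Ioo 0 a)
    (hσ : σ ∈ Ico 0 1) {x : ℝ} (hx : x ∈ Ico 0 a) :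
    twistedSum f g B x = twistedSum f g B (f x) * g x + B x :=
  (hasSum_twistedSum hf hg hB hgσ hahat hσ hx).unique <| hasSum_twistedTerm_of_hasSum_apply <|
    hasSum_twistedSum hf hg hB hgσ hahat hσ (hf.mapsTo_Ico hx)

theorem eqOn_zero_of_eq_mul (hf : AttractsToZero f a) (hg : ContinuousOn g (Ico 0 a))
    (hgσ : ∀ y ∈ Icc 0 ahat, |g y| ≤ σ) (hahat : ahat ∈ Ioo 0 a) (hσ : σ ∈ Ico 0 1)
    {h : ℝ → ℝ} {M : ℝ} (hM : ∀ y ∈ Icc 0 ahat, |h y| ≤ M)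
    (hh : ∀ y ∈ Ico 0 a, h y = h (f y) * g y) : EqOn h 0 (Ico 0 a) := by
  intro x hx
  have hxx : x ∈ Icc 0 x := ⟨hx.1, le_rfl⟩
  obtain ⟨N, hN⟩ := hf.exists_mapsTo_iterate_Icc hx hahat.1
  obtain ⟨K, hK⟩ := exists_abs_orbitProd_le hf hg hgσ hahat.2 hx.2 hN
  have hbound : ∀ n ≥ N, |h x| ≤ M * K ^ N * σ ^ (n - N) := fun n hn => by
    obtain ⟨m, rfl⟩ := Nat.exists_eq_add_of_le hn
    have horbit : f^[N + m] x ∈ Icc 0 ahat := by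
      rw [add_comm, Function.iterate_add_apply]
      exact (hf.mapsTo_Icc hahat.2).iterate m (hN hxx)
    rw [eq_mul_orbitProd_of_mapsTo f g hf.mapsTo_Ico hh (N + m) x hx, abs_mul]
    exact (mul_le_mul (hM _ horbit) (hK x hxx _) (abs_nonneg _)
      ((abs_nonneg _).trans (hM 0 ⟨le_rfl, hahat.1.le⟩))).trans_eq (mul_assoc _ _ _).symm
  have hlim : Tendsto (fun n => M * K ^ N * σ ^ (n - N)) atTop (𝓝 0) := by
    simpa using ((tendsto_pow_atTop_nhds_zero_of_lt_one hσ.1 hσ.2).comp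
      (tendsto_sub_atTop_nat N)).const_mul (M * K ^ N)
  exact abs_nonpos_iff.mp (ge_of_tendsto hlim (eventually_atTop.2 ⟨N, hbound⟩))

theorem eqOn_of_eq_mul_add (hf : AttractsToZero f a) (hg : ContinuousOn g (Ico 0 a))
    (hgσ : ∀ y ∈ Icc 0 ahat, |g y| ≤ σ) (hahat : ahat ∈ Ioo 0 a) (hσ : σ ∈ Ico 0 1)
    {p q : ℝ → ℝ} {Mp Mq : ℝ} (hMp : ∀ y ∈ Icc 0 ahat, |p y| ≤ Mp)
    (hMq : ∀ y ∈ Icc 0 ahat, |q y| ≤ Mq) (hp : ∀ y ∈ Ico 0 a, p y = p (f y) * g y + B y)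
    (hq : ∀ y ∈ Ico 0 a, q y = q (f y) * g y + B y) : EqOn q p (Ico 0 a) := by
  have hzero := eqOn_zero_of_eq_mul hf hg hgσ hahat hσ (h := q - p) (M := Mq + Mp)
    (fun y hy => (abs_sub _ _).trans (add_le_add (hMq y hy) (hMp y hy)))
    (fun y hy => by simp only [Pi.sub_apply]; rw [hq y hy, hp y hy]; ring)
  exact fun x hx => sub_eq_zero.mp (hzero hx)

end TwistedEquation

theorem functional_equation_extension_to_Ico_general
    (a ahat σ : ℝ) (hahat : ahat ∈ Set.Ioo 0 a)
    (hσ : σ ∈ Set.Ioo (0:ℝ) 1)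
    (τ21 τ21' τ1' : ℝ → ℝ)
    (hT21d : ∀ x ∈ Set.Icc 0 a, HasDerivAt τ21 (τ21' x) x)
    (hT21c : ContinuousOn τ21' (Set.Icc 0 a))
    (hT21mono : StrictMonoOn τ21 (Set.Icc 0 a))
    (hT210 : τ21 0 = 0)
    (hT21lt : ∀ x ∈ Set.Ioo 0 a, τ21 x < x)
    (hT21bd : ∀ x ∈ Set.Icc 0 ahat, 0 ≤ τ21' x ∧ τ21' x ≤ σ)
    (hT1c : ContinuousOn τ1' (Set.Icc 0 a))
    (B : ℝ → ℝ) (hB : B = fun x => a * τ1' x - τ21' x)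
    (term : ℕ → ℝ → ℝ)
    (hterm : term = fun n x => B (τ21^[n] x) * ∏ k ∈ Finset.range n, τ21' (τ21^[k] x)) :
    ∃ p : ℝ → ℝ,
      ((∃ M, ∀ x ∈ Set.Icc 0 ahat, |p x| ≤ M) ∧
        (∀ x ∈ Set.Ico 0 a, p x = p (τ21 x) * τ21' x + B x)) ∧
      (∀ x ∈ Set.Ico 0 a, HasSum (fun n => term n x) (p x)) ∧
      (∀ s ∈ Set.Ioo 0 a,
        TendstoUniformlyOn (fun m x => ∑ n ∈ Finset.range m, term n x) p
          Filter.atTop (Set.Icc 0 s)) ∧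
      ∀ q : ℝ → ℝ,
        ((∃ M, ∀ x ∈ Set.Icc 0 ahat, |q x| ≤ M) ∧
          (∀ x ∈ Set.Ico 0 a, q x = q (τ21 x) * τ21' x + B x)) →
        Set.EqOn q p (Set.Ico 0 a) := by
  subst hterm
  have hIco : Ico 0 a ⊆ Icc 0 a := Ico_subset_Icc_self
  have hf : AttractsToZero τ21 a :=
    ⟨hT21mono.monotoneOn.mono hIco, hT210, hT21lt, fun y hy => (hT21d y (hIco hy)).continuousAt⟩
  have hg := hT21c.mono hIco
  have hBc : ContinuousOn B (Ico 0 a) := by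
    rw [hB]
    exact ((continuousOn_const.mul hT1c).sub hT21c).mono hIco
  have hgσ : ∀ y ∈ Icc 0 ahat, |τ21' y| ≤ σ := fun y hy =>
    abs_le.2 ⟨by linarith [(hT21bd y hy).1, hσ.1], (hT21bd y hy).2⟩
  have hσ' := Ioo_subset_Ico_self hσ
  obtain ⟨M, hM⟩ :=
    exists_abs_twistedSum_le hf hg hBc hgσ hahat hσ' ⟨hahat.1.le, hahat.2⟩
  have hfeq := fun x (hx : x ∈ Ico 0 a) => twistedSum_eq hf hg hBc hgσ hahat hσ' hx
  refine ⟨twistedSum τ21 τ21' B, ⟨⟨M, hM⟩, hfeq⟩,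
    fun x hx => hasSum_twistedSum hf hg hBc hgσ hahat hσ' hx,
    fun s hs => tendstoUniformlyOn_twistedSum hf hg hBc hgσ hahat hσ' ⟨hs.1.le, hs.2⟩, ?_⟩
  rintro q ⟨⟨Mq, hMq⟩, hq⟩
  exact eqOn_of_eq_mul_add hf hg hgσ hahat hσ' hM hMq hfeq hq

/-- There exists exactly one function `p` on `[0,a)`, bounded on `[0,â]`,
satisfying `p(x) = p(τ21 x)·τ21'(x) + B(x)` on `[0,a)`; it is given by the series
`Σₙ B(τ21ⁿ(x))·(τ21ⁿ)'(x)`, which converges on `[0,a)` and uniformly on every `[0,s]`,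
`s ∈ (0,a)`, where `B = a·τ1' − τ21'`. -/
theorem functional_equation_extension_to_Ico
    (a ahat σ : ℝ) (ha : a ∈ Set.Ioo (0:ℝ) 1) (hahat : ahat ∈ Set.Ioo 0 a)
    (hσ : σ ∈ Set.Ioo (0:ℝ) 1)
    (τ21 τ21' τ1 τ1' : ℝ → ℝ)
    (hT21d : ∀ x ∈ Set.Icc 0 a, HasDerivAt τ21 (τ21' x) x)
    (hT21c : ContinuousOn τ21' (Set.Icc 0 a))
    (hT21mono : StrictMonoOn τ21 (Set.Icc 0 a))
    (hT210 : τ21 0 = 0) (hT21a : τ21 a = a)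
    (hT21lt : ∀ x ∈ Set.Ioo 0 a, τ21 x < x)
    (hT21bd : ∀ x ∈ Set.Icc 0 ahat, 0 ≤ τ21' x ∧ τ21' x ≤ σ)
    (hT1d : ∀ x ∈ Set.Icc 0 a, HasDerivAt τ1 (τ1' x) x)
    (hT1c : ContinuousOn τ1' (Set.Icc 0 a))
    (hT1mono : StrictMonoOn τ1 (Set.Icc 0 a))
    (hT10 : τ1 0 = 0) (hT1a : τ1 a = 1)
    (B : ℝ → ℝ) (hB : B = fun x => a * τ1' x - τ21' x)
    (term : ℕ → ℝ → ℝ)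
    (hterm : term = fun n x => B (τ21^[n] x) * ∏ k ∈ Finset.range n, τ21' (τ21^[k] x)) :
    ∃ p : ℝ → ℝ,
      ((∃ M, ∀ x ∈ Set.Icc 0 ahat, |p x| ≤ M) ∧
        (∀ x ∈ Set.Ico 0 a, p x = p (τ21 x) * τ21' x + B x)) ∧
      (∀ x ∈ Set.Ico 0 a, HasSum (fun n => term n x) (p x)) ∧
      (∀ s ∈ Set.Ioo 0 a,
        TendstoUniformlyOn (fun m x => ∑ n ∈ Finset.range m, term n x) p
          Filter.atTop (Set.Icc 0 s)) ∧
      ∀ q : ℝ → ℝ,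
        ((∃ M, ∀ x ∈ Set.Icc 0 ahat, |q x| ≤ M) ∧
          (∀ x ∈ Set.Ico 0 a, q x = q (τ21 x) * τ21' x + B x)) →
        Set.EqOn q p (Set.Ico 0 a) :=
  functional_equation_extension_to_Ico_general a ahat σ hahat hσ τ21 τ21' τ1' hT21d hT21c hT21mono
    hT210 hT21lt hT21bd hT1c B hB term hterm
end

section
/- Let 0 = a₀ < a₁ < ⋯ < a_m = 1 be a partition of [0,1] with intervals I_j = [a_{j−1}, a_j], and let τ1, τ2 : [0,1] → [0,1] satisfy: τ1(x) ≤ τ2(x) for all x; on each I_j both τ1 and τ2 restrict to C¹ functions that are strictly monotone with the same orientation (both increasing or both decreasing) and satisfy |τ_k′(x)| > 2 (piecewise expanding with slope greater than 2). Let p : [0,1] → [0,1] be Borel measurable and let f be a density with f(x) > 0 for λ_Leb-a.e. x that is invariant under the random map R = {τ1, τ2; p, 1−p}. Then there exists a Borel measurable map 𝝉 : [0,1] → [0,1] such that τ1(x) ≤ 𝝉(x) ≤ τ2(x) for all x ∈ [0,1], 𝝉 is monotone on each partition interval I_j, and the measure f·λ_Leb is invariant under 𝝉, i.e. (f·λ_Leb)(𝝉⁻¹(A))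 = (f·λ_Leb)(A) for every Borel set A. In other words, every invariant density of a random map based on the boundary maps is also the invariant density of a selector. -/
open MeasureTheory Set Filter
open scoped ENNReal

/-!
Let `μ = f · λ_Leb`. Group the partition intervals into maximal runs on which `τ1` and `τ2` are both
increasing (or both decreasing); on a run `[l, r]` both maps are monotone. With
`F x = μ [l, x]` and `G` the distribution function of the random image `R_* (μ|[l, r])`,
monotonicity gives `F x ≤ G (τ2 x)` and `G s ≤ μ [l, x)` for `s < τ1 x`, so the quantile coupling
`T x = sup {s ≤ τ2 x | G s ≤ F x}` is a monotone selector with `T_* (μ|[l, r]) = R_* (μ|[l, r])`;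
it works because `μ` has no atoms, so `F` pushes `μ|[l, r]` to Lebesgue measure. Decreasing runs
reduce to increasing ones by `x ↦ -x`. Consecutive runs have opposite orientations, so at their
common endpoint `c` one of `τ1 c`, `τ2 c` is an extreme value of the boundary map on both sides,
and using it as the value of `T` at `c` glues the run selectors monotonically. Summing over the
runs, `T_* μ = R_* μ = μ`.
-/

section DistributionFunction

variable {ρ : Measure ℝ}

theorem measure_Iio_le_of_forall_lt {x : ℝ} {c : ℝ≥0∞} (h : ∀ y < x, ρ (Iic y) ≤ c) :
    ρ (Iio x) ≤ c := by
  obtain ⟨u, hu_mono, hu_lt, hu_lim⟩ := exists_seq_strictMono_tendsto x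
  rw [← iUnion_Iic_eq_Iio_of_lt_of_tendsto hu_lt hu_lim,
    Monotone.measure_iUnion fun _ _ hij => Iic_subset_Iic.2 (hu_mono.monotone hij)]
  exact iSup_le fun n => h _ (hu_lt n)

theorem le_measure_Iic_of_forall_gt [IsFiniteMeasure ρ] {x : ℝ} {c : ℝ≥0∞}
    (h : ∀ y, x < y → c ≤ ρ (Iic y)) : c ≤ ρ (Iic x) := by
  obtain ⟨u, hu_anti, hu_gt, hu_lim⟩ := exists_seq_strictAnti_tendsto x
  have hinter : ⋂ n, Iic (u n) = Iic x := by
    ext z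
    simp only [mem_iInter, mem_Iic]
    exact ⟨fun hz => ge_of_tendsto' hu_lim hz, fun hz n => hz.trans (hu_gt n).le⟩
  rw [← hinter, Antitone.measure_iInter (fun _ _ hij => Iic_subset_Iic.2 (hu_anti.antitone hij))
    (fun _ => measurableSet_Iic.nullMeasurableSet) ⟨0, measure_ne_top ρ _⟩]
  exact le_iInf fun n => h _ (hu_gt n)

variable {l r : ℝ}

theorem measure_Iic_eq_zero_of_ae_mem_Icc [NullSingletonClass ρ] (hρ : ∀ᵐ x ∂ρ, x ∈ Icc l r) :
    ρ (Iic l) = 0 := by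
  rw [measure_congr Iio_ae_eq_Iic.symm]
  exact measure_mono_null (fun x (hx : x < l) (hmem : x ∈ Icc l r) => not_le.2 hx hmem.1)
    (ae_iff.1 hρ)

theorem measure_Iic_eq_univ_of_ae_mem_Icc (hρ : ∀ᵐ x ∂ρ, x ∈ Icc l r) :
    ρ (Iic r) = ρ univ :=
  le_antisymm (measure_mono (subset_univ _)) (measure_mono_ae (hρ.mono fun _ hx _ => hx.2))

theorem measure_setOf_measure_Iic_le_le [NullSingletonClass ρ] (hρ : ∀ᵐ x ∂ρ, x ∈ Icc l r)
    (c : ℝ≥0∞) : ρ {x | ρ (Iic x) ≤ c} ≤ c := by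
  set S := {x | ρ (Iic x) ≤ c} ∩ Iic r
  have hS : S.Nonempty := ⟨min l r, (measure_mono (Iic_subset_Iic.2 (min_le_left l r))).trans
    (measure_Iic_eq_zero_of_ae_mem_Icc hρ).le |>.trans zero_le, min_le_right l r⟩
  have hSbdd : BddAbove S := ⟨r, fun _ hx => hx.2⟩
  calc ρ {x | ρ (Iic x) ≤ c}
      ≤ ρ (Iic (sSup S)) := measure_mono_ae (hρ.mono fun x hx hxc => le_csSup hSbdd ⟨hxc, hx.2⟩)
    _ = ρ (Iio (sSup S)) := measure_congr Iio_ae_eq_Iic.symm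
    _ ≤ c := measure_Iio_le_of_forall_lt fun y hy => by
      obtain ⟨z, hz, hyz⟩ := exists_lt_of_lt_csSup hS hy
      exact (measure_mono (Iic_subset_Iic.2 hyz.le)).trans hz.1

theorem le_measure_setOf_measure_Iic_lt [IsFiniteMeasure ρ] [NullSingletonClass ρ]
    (hρ : ∀ᵐ x ∂ρ, x ∈ Icc l r) {c : ℝ≥0∞} (hc : c ≤ ρ univ) :
    c ≤ ρ {x | ρ (Iic x) < c} := by
  rcases eq_zero_or_pos c with rfl | hc0
  · exact zero_le
  set S := {x | ρ (Iic x) < c}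
  have hS : S.Nonempty := ⟨l, by simpa [S, measure_Iic_eq_zero_of_ae_mem_Icc hρ] using hc0⟩
  have hSbdd : BddAbove S := ⟨r, fun x hx => not_lt.1 fun hrx => not_le.2 hx <| hc.trans <|
    (measure_Iic_eq_univ_of_ae_mem_Icc hρ).symm.trans_le (measure_mono (Iic_subset_Iic.2 hrx.le))⟩
  calc c ≤ ρ (Iic (sSup S)) := le_measure_Iic_of_forall_gt fun y hy =>
        not_lt.1 fun hyS => not_le.2 hy (le_csSup hSbdd hyS)
    _ = ρ (Iio (sSup S)) := measure_congr Iio_ae_eq_Iic.symm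
    _ ≤ ρ S := measure_mono fun y hy => by
      obtain ⟨z, hz, hyz⟩ := exists_lt_of_lt_csSup hS hy
      exact (measure_mono (Iic_subset_Iic.2 hyz.le)).trans_lt hz

theorem measure_eq_of_sublevel_squeeze [IsFiniteMeasure ρ] [NullSingletonClass ρ]
    (hρ : ∀ᵐ x ∂ρ, x ∈ Icc l r) {c : ℝ≥0∞} (hc : c ≤ ρ univ) {S : Set ℝ}
    (hlt : ∀ x ∈ Icc l r, ρ (Iic x) < c → x ∈ S)
    (hle : ∀ x ∈ Icc l r, x ∈ S → ρ (Iic x) ≤ c) : ρ S = c :=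
  le_antisymm
    ((measure_mono_ae (hρ.mono fun x hx hxS => hle x hx hxS)).trans
      (measure_setOf_measure_Iic_le_le hρ c))
    ((le_measure_setOf_measure_Iic_lt hρ hc).trans
      (measure_mono_ae (hρ.mono fun x hx hxc => hlt x hx hxc)))

end DistributionFunction

theorem exists_monotone_map_eq {ρ ν : Measure ℝ} [IsFiniteMeasure ρ] [NullSingletonClass ρ]
    [IsFiniteMeasure ν] {l r : ℝ} (hlr : l ≤ r) (hρ : ∀ᵐ x ∂ρ, x ∈ Icc l r)
    {g₁ g₂ : ℝ → ℝ} (hg₂ : Monotone g₂) (hg : ∀ x ∈ Icc l r, g₁ x ≤ g₂ x)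
    (hmass : ν univ = ρ univ) (hup : ∀ x ∈ Icc l r, ρ (Iic x) ≤ ν (Iic (g₂ x)))
    (hlow : ∀ x ∈ Icc l r, ∀ s < g₁ x, ν (Iic s) ≤ ρ (Iio x)) :
    ∃ T : ℝ → ℝ, Monotone T ∧ (∀ x ∈ Icc l r, g₁ x ≤ T x ∧ T x ≤ g₂ x) ∧ ρ.map T = ν := by
  set feasible : ℝ → Set ℝ := fun x => {s | s ≤ g₂ x ∧ ν (Iic s) ≤ ρ (Iic x)}
  have hbdd : ∀ x, BddAbove (feasible x) := fun x => ⟨g₂ x, fun _ hs => hs.1⟩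
  have mem_feasible : ∀ x ∈ Icc l r, ∀ s < g₁ x, s ∈ feasible x := fun x hx s hs =>
    ⟨hs.le.trans (hg x hx), (hlow x hx s hs).trans (measure_mono Iio_subset_Iic_self)⟩
  have hne : ∀ x, (feasible x).Nonempty := fun x => by
    refine ⟨min (g₁ l - 1) (g₂ x), min_le_right _ _, ?_⟩
    calc ν (Iic (min (g₁ l - 1) (g₂ x))) ≤ ρ (Iio l) :=
          hlow l ⟨le_rfl, hlr⟩ _ ((min_le_left _ _).trans_lt (sub_one_lt _))
      _ ≤ ρ (Iic l) := measure_mono Iio_subset_Iic_self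
      _ = 0 := measure_Iic_eq_zero_of_ae_mem_Icc hρ
      _ ≤ ρ (Iic x) := zero_le
  set T : ℝ → ℝ := fun x => sSup (feasible x)
  have hT : Monotone T := fun x y hxy => csSup_le_csSup (hbdd y) (hne x)
    fun s hs => ⟨hs.1.trans (hg₂ hxy), hs.2.trans (measure_mono (Iic_subset_Iic.2 hxy))⟩
  have lt_T : ∀ x ∈ Icc l r, ∀ t, ν (Iic t) < ρ (Iic x) → t < T x := by
    intro x hx t ht
    have htg : t < g₂ x := not_le.1 fun h =>
      not_le.2 ht ((hup x hx).trans (measure_mono (Iic_subset_Iic.2 h)))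
    obtain ⟨y, hty, hy⟩ : ∃ y, t < y ∧ ν (Iic y) < ρ (Iic x) := by
      by_contra! h
      exact not_le.2 ht (le_measure_Iic_of_forall_gt h)
    exact (lt_min hty htg).trans_le <| le_csSup (hbdd x)
      ⟨min_le_right _ _, (measure_mono (Iic_subset_Iic.2 (min_le_left _ _))).trans hy.le⟩
  have le_of_lt_T : ∀ x t, t < T x → ν (Iic t) ≤ ρ (Iic x) := by
    intro x t ht
    obtain ⟨s, hs, hts⟩ := exists_lt_of_lt_csSup (hne x) ht
    exact (measure_mono (Iic_subset_Iic.2 hts.le)).trans hs.2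
  refine ⟨T, hT, fun x hx => ⟨?_, csSup_le (hne x) fun _ hs => hs.1⟩, ?_⟩
  · exact forall_lt_imp_le_iff_le_of_dense.1 fun s hs => le_csSup (hbdd x) (mem_feasible x hx s hs)
  · refine Measure.ext_of_Iic _ _ fun t => ?_
    rw [Measure.map_apply hT.measurable measurableSet_Iic]
    exact measure_eq_of_sublevel_squeeze hρ (hmass ▸ measure_mono (subset_univ _))
      (fun x _ hx => not_lt.1 fun h => not_le.2 hx (le_of_lt_T x t h))
      (fun x hx hxt => not_lt.1 fun h => not_le.2 (lt_T x hx t h) hxt)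

/-- `RMInvariant τ1 τ2 p μ` says `μ A = ∫⁻ x, transitionProb τ1 τ2 p A x ∂μ` for measurable `A`. -/
noncomputable def transitionProb (τ1 τ2 p : ℝ → ℝ) (A : Set ℝ) (x : ℝ) : ℝ≥0∞ :=
  ENNReal.ofReal (p x) * A.indicator (fun _ => (1:ℝ≥0∞)) (τ1 x)
    + ENNReal.ofReal (1 - p x) * A.indicator (fun _ => (1:ℝ≥0∞)) (τ2 x)

section TransitionProb

variable {τ1 τ2 p : ℝ → ℝ} {A B : Set ℝ} {x : ℝ}

theorem transitionProb_of_mem (hp : p x ∈ Icc 0 1) (h1 : τ1 x ∈ A) (h2 : τ2 x ∈ A) :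
    transitionProb τ1 τ2 p A x = 1 := by
  rw [transitionProb, indicator_of_mem h1, indicator_of_mem h2, mul_one, mul_one,
    ← ENNReal.ofReal_add hp.1 (sub_nonneg.2 hp.2), add_sub_cancel, ENNReal.ofReal_one]

theorem transitionProb_of_notMem (h1 : τ1 x ∉ A) (h2 : τ2 x ∉ A) :
    transitionProb τ1 τ2 p A x = 0 := by
  simp [transitionProb, indicator_of_notMem h1, indicator_of_notMem h2]

theorem transitionProb_le_one (hp : p x ∈ Icc 0 1) : transitionProb τ1 τ2 p A x ≤ 1 := by
  rw [← transitionProb_of_mem (A := univ) hp (mem_univ _) (mem_univ _)]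
  unfold transitionProb
  gcongr <;> exact subset_univ A

theorem indicator_le_transitionProb (hp : p x ∈ Icc 0 1) (h : x ∈ B → τ1 x ∈ A ∧ τ2 x ∈ A) :
    B.indicator 1 x ≤ transitionProb τ1 τ2 p A x := by
  by_cases hx : x ∈ B
  · rw [indicator_of_mem hx, Pi.one_apply, transitionProb_of_mem hp (h hx).1 (h hx).2]
  · simp [indicator_of_notMem hx]

theorem transitionProb_le_indicator (hp : p x ∈ Icc 0 1) (h : x ∉ B → τ1 x ∉ A ∧ τ2 x ∉ A) :
    transitionProb τ1 τ2 p A x ≤ B.indicator 1 x := by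
  by_cases hx : x ∈ B
  · rw [indicator_of_mem hx, Pi.one_apply]
    exact transitionProb_le_one hp
  · rw [transitionProb_of_notMem (h hx).1 (h hx).2]
    exact zero_le

end TransitionProb

noncomputable def randomImage (τ1 τ2 p : ℝ → ℝ) (ρ : Measure ℝ) : Measure ℝ :=
  (ρ.withDensity fun x => ENNReal.ofReal (p x)).map τ1
    + (ρ.withDensity fun x => ENNReal.ofReal (1 - p x)).map τ2

theorem randomImage_apply {τ1 τ2 p : ℝ → ℝ} (hτ1 : Measurable τ1) (hτ2 : Measurable τ2)
    (hp : Measurable p) (ρ : Measure ℝ) {A : Set ℝ} (hA : MeasurableSet A) :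
    randomImage τ1 τ2 p ρ A = ∫⁻ x, transitionProb τ1 τ2 p A x ∂ρ := by
  have hP : Measurable fun x => ENNReal.ofReal (p x) := hp.ennreal_ofReal
  have hQ : Measurable fun x => ENNReal.ofReal (1 - p x) :=
    (measurable_const.sub hp).ennreal_ofReal
  rw [randomImage, Measure.add_apply, Measure.map_apply hτ1 hA, Measure.map_apply hτ2 hA,
    withDensity_apply _ (hτ1 hA), withDensity_apply _ (hτ2 hA), ← lintegral_indicator (hτ1 hA),
    ← lintegral_indicator (hτ2 hA), ← lintegral_add_left (hP.indicator (hτ1 hA))]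
  congr 1 with x
  by_cases h1 : τ1 x ∈ A <;> by_cases h2 : τ2 x ∈ A <;> simp [transitionProb, h1, h2]

/-- `T_* ρ = R_* ρ`, stated through `transitionProb` since `τ1`, `τ2` need not be measurable. -/
def TransportsAs (T τ1 τ2 p : ℝ → ℝ) (ρ : Measure ℝ) : Prop :=
  ∀ A : Set ℝ, MeasurableSet A → ρ (T ⁻¹' A) = ∫⁻ x, transitionProb τ1 τ2 p A x ∂ρ

namespace TransportsAs

variable {T T' τ1 τ2 p : ℝ → ℝ} {ρ ρ' : Measure ℝ}

theorem add (h : TransportsAs T τ1 τ2 p ρ) (h' : TransportsAs T τ1 τ2 p ρ') :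
    TransportsAs T τ1 τ2 p (ρ + ρ') := fun A hA => by
  rw [Measure.add_apply, lintegral_add_measure, h A hA, h' A hA]

theorem congr_ae (h : TransportsAs T τ1 τ2 p ρ) (hT : T =ᵐ[ρ] T') :
    TransportsAs T' τ1 τ2 p ρ := fun A hA => by
  rw [← h A hA]
  exact measure_congr (hT.mono fun x hx => congrArg A hx.symm)

end TransportsAs

def IsSelectorOn (τ1 τ2 T : ℝ → ℝ) (s : Set ℝ) : Prop :=
  ∀ x ∈ s, τ1 x ≤ T x ∧ T x ≤ τ2 x

section Block

variable {ρ : Measure ℝ} [IsFiniteMeasure ρ] [NullSingletonClass ρ] {l r : ℝ} {τ1 τ2 p : ℝ → ℝ}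

theorem exists_monotone_transportsAs (hlr : l ≤ r) (hρ : ∀ᵐ x ∂ρ, x ∈ Icc l r)
    (hpm : Measurable p) (hp : ∀ x ∈ Icc l r, p x ∈ Icc 0 1)
    (hle : ∀ x ∈ Icc l r, τ1 x ≤ τ2 x)
    (h1 : MonotoneOn τ1 (Icc l r)) (h2 : MonotoneOn τ2 (Icc l r)) :
    ∃ T, Monotone T ∧ IsSelectorOn τ1 τ2 T (Icc l r) ∧ TransportsAs T τ1 τ2 p ρ := by
  have hl : l ∈ Icc l r := left_mem_Icc.2 hlr
  have hr : r ∈ Icc l r := right_mem_Icc.2 hlr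
  obtain ⟨e1, he1, he1τ⟩ := h1.exists_monotone_extension
    ⟨τ1 l, forall_mem_image.2 fun x hx => h1 hl hx hx.1⟩
    ⟨τ1 r, forall_mem_image.2 fun x hx => h1 hx hr hx.2⟩
  obtain ⟨e2, he2, he2τ⟩ := h2.exists_monotone_extension
    ⟨τ2 l, forall_mem_image.2 fun x hx => h2 hl hx hx.1⟩
    ⟨τ2 r, forall_mem_image.2 fun x hx => h2 hx hr hx.2⟩
  have hle' : ∀ x ∈ Icc l r, e1 x ≤ e2 x := fun x hx => he1τ hx ▸ he2τ hx ▸ hle x hx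
  have hν : ∀ A, MeasurableSet A →
      randomImage e1 e2 p ρ A = ∫⁻ x, transitionProb e1 e2 p A x ∂ρ :=
    fun A hA => randomImage_apply he1.measurable he2.measurable hpm ρ hA
  have hmass : randomImage e1 e2 p ρ univ = ρ univ := by
    rw [hν univ MeasurableSet.univ, ← lintegral_one]
    exact lintegral_congr_ae (hρ.mono fun x hx => transitionProb_of_mem (hp x hx) trivial trivial)
  have hup : ∀ x ∈ Icc l r, ρ (Iic x) ≤ randomImage e1 e2 p ρ (Iic (e2 x)) := by
    intro x hx
    rw [hν _ measurableSet_Iic, ← lintegral_indicator_one measurableSet_Iic]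
    exact lintegral_mono_ae <| hρ.mono fun z hz => indicator_le_transitionProb (hp z hz)
      fun hzx => ⟨(he1 hzx).trans (hle' x hx), he2 hzx⟩
  have hlow : ∀ x ∈ Icc l r, ∀ s < e1 x, randomImage e1 e2 p ρ (Iic s) ≤ ρ (Iio x) := by
    intro x hx s hs
    rw [hν _ measurableSet_Iic, ← lintegral_indicator_one measurableSet_Iio]
    refine lintegral_mono_ae <| hρ.mono fun z hz => transitionProb_le_indicator (hp z hz)
      fun hzx => ?_
    have hxz : x ≤ z := not_lt.1 hzx
    exact ⟨fun h => not_le.2 hs ((he1 hxz).trans h),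
      fun h => not_le.2 (hs.trans_le (hle' x hx)) ((he2 hxz).trans h)⟩
  have : IsFiniteMeasure (randomImage e1 e2 p ρ) := ⟨hmass ▸ measure_lt_top ρ univ⟩
  obtain ⟨T, hT, hTsel, hTmap⟩ := exists_monotone_map_eq hlr hρ he2 hle' hmass hup hlow
  refine ⟨T, hT, fun x hx => he1τ hx ▸ he2τ hx ▸ hTsel x hx, fun A hA => ?_⟩
  rw [← Measure.map_apply hT.measurable hA, hTmap, hν A hA]
  exact lintegral_congr_ae <| hρ.mono fun x hx => by
    rw [transitionProb, transitionProb, he1τ hx, he2τ hx]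

theorem exists_antitone_transportsAs (hlr : l ≤ r) (hρ : ∀ᵐ x ∂ρ, x ∈ Icc l r)
    (hpm : Measurable p) (hp : ∀ x ∈ Icc l r, p x ∈ Icc 0 1)
    (hle : ∀ x ∈ Icc l r, τ1 x ≤ τ2 x)
    (h1 : AntitoneOn τ1 (Icc l r)) (h2 : AntitoneOn τ2 (Icc l r)) :
    ∃ T, Antitone T ∧ IsSelectorOn τ1 τ2 T (Icc l r) ∧ TransportsAs T τ1 τ2 p ρ := by
  set σ := MeasurableEquiv.neg ℝ
  have : NullSingletonClass (ρ.map σ) := ⟨fun y => by rw [MeasurableEquiv.map_apply]; simp [σ]⟩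
  have hmem : ∀ {y}, y ∈ Icc (-r) (-l) → -y ∈ Icc l r := neg_mem_Icc_iff.2
  have hρ' : ∀ᵐ y ∂ρ.map σ, y ∈ Icc (-r) (-l) :=
    σ.measurableEmbedding.ae_map_iff.2 <| hρ.mono fun x hx => neg_mem_Icc_iff.2 (by simpa [σ])
  obtain ⟨T, hT, hTsel, hTtr⟩ := exists_monotone_transportsAs (neg_le_neg hlr) hρ'
    (hpm.comp measurable_neg) (fun y hy => hp _ (hmem hy)) (fun y hy => hle _ (hmem hy))
    (fun y hy z hz hyz => h1 (hmem hz) (hmem hy) (neg_le_neg hyz))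
    (fun y hy z hz hyz => h2 (hmem hz) (hmem hy) (neg_le_neg hyz))
  refine ⟨fun x => T (-x), hT.comp_antitone fun _ _ h => neg_le_neg h,
    fun x hx => by simpa using hTsel (-x) (neg_mem_Icc_iff.2 (by simpa using hx)), fun A hA => ?_⟩
  have := hTtr A hA
  rw [MeasurableEquiv.map_apply, lintegral_map_equiv] at this
  convert this using 2 <;> ext x <;> simp [σ, transitionProb]

end Block

section Pieces

variable {α β : Type*} [LinearOrder α] [Preorder β] {f : α → β} {a : ℕ → α} {s n : ℕ}

theorem monotoneOn_Icc_of_pieces (hsn : s ≤ n) (ha : MonotoneOn a (Icc s n))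
    (hf : ∀ i, s ≤ i → i < n → MonotoneOn f (Icc (a i) (a (i + 1)))) :
    MonotoneOn f (Icc (a s) (a n)) := by
  induction n, hsn using Nat.le_induction with
  | base => simp [Set.Icc_self]
  | succ k hsk ih =>
    have hk : a s ≤ a k := ha ⟨le_rfl, hsk.trans k.le_succ⟩ ⟨hsk, k.le_succ⟩ hsk
    have hk1 : a k ≤ a (k + 1) := ha ⟨hsk, k.le_succ⟩ ⟨hsk.trans k.le_succ, le_rfl⟩ k.le_succ
    rw [← Icc_union_Icc_eq_Icc hk hk1]
    have hsk' : MonotoneOn f (Icc (a s) (a k)) := ih (ha.mono (Icc_subset_Icc_right k.le_succ))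
      fun i hi hik => hf i hi (hik.trans k.lt_succ_self)
    exact hsk'.union_right (hf k hsk k.lt_succ_self) (isGreatest_Icc hk) (isLeast_Icc hk1)

theorem antitoneOn_Icc_of_pieces (hsn : s ≤ n) (ha : MonotoneOn a (Icc s n))
    (hf : ∀ i, s ≤ i → i < n → AntitoneOn f (Icc (a i) (a (i + 1)))) :
    AntitoneOn f (Icc (a s) (a n)) :=
  monotoneOn_toDual_comp_iff.1 <|
    monotoneOn_Icc_of_pieces hsn ha fun i hsi hin => (hf i hsi hin).dual_right

end Pieces

theorem exists_run_start (inc : ℕ → Prop) {n : ℕ} (hn : 0 < n) :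
    ∃ s < n, (∀ j, s ≤ j → j < n → (inc j ↔ inc s)) ∧ (0 < s → ¬(inc (s - 1) ↔ inc s)) := by
  induction n, hn using Nat.le_induction with
  | base =>
    exact ⟨0, one_pos, fun j _ hj => by rw [Nat.lt_one_iff.1 hj], fun h => absurd h (lt_irrefl 0)⟩
  | succ n hn ih =>
    obtain ⟨s, hsn, hrun, hswitch⟩ := ih
    by_cases h : inc n ↔ inc s
    · refine ⟨s, hsn.trans n.lt_succ_self, fun j hsj hjn => ?_, hswitch⟩
      rcases (Nat.lt_succ_iff.1 hjn).lt_or_eq with hj | rfl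
      exacts [hrun j hsj hj, h]
    · refine ⟨n, n.lt_succ_self, fun j hnj hjn => by rw [le_antisymm (Nat.lt_succ_iff.1 hjn) hnj],
        fun _ => ?_⟩
      rwa [hrun (n - 1) (Nat.le_sub_one_of_lt hsn) (Nat.sub_lt hn one_pos), Iff.comm]

noncomputable def glueAt (c e : ℝ) (f g : ℝ → ℝ) (x : ℝ) : ℝ :=
  if x < c then f x else if x = c then e else g x

section GlueAt

variable {c e l r : ℝ} {f g : ℝ → ℝ}

theorem glueAt_of_lt {x : ℝ} (hx : x < c) : glueAt c e f g x = f x := if_pos hx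

@[simp]
theorem glueAt_self : glueAt c e f g c = e := by simp [glueAt]

theorem glueAt_of_gt {x : ℝ} (hx : c < x) : glueAt c e f g x = g x := by
  rw [glueAt, if_neg (not_lt.2 hx.le), if_neg hx.ne']

theorem Measurable.glueAt (hf : Measurable f) (hg : Measurable g) :
    Measurable (glueAt c e f g) :=
  hf.ite measurableSet_Iio (measurable_const.ite (measurableSet_singleton c) hg)

theorem IsSelectorOn.glueAt {τ1 τ2 : ℝ → ℝ} (hf : IsSelectorOn τ1 τ2 f (Icc l c))
    (hg : IsSelectorOn τ1 τ2 g (Icc c r)) (he : τ1 c ≤ e ∧ e ≤ τ2 c) :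
    IsSelectorOn τ1 τ2 (glueAt c e f g) (Icc l r) := by
  intro x hx
  rcases lt_trichotomy x c with h | rfl | h
  · rw [glueAt_of_lt h]; exact hf x ⟨hx.1, h.le⟩
  · rw [glueAt_self]; exact he
  · rw [glueAt_of_gt h]; exact hg x ⟨h.le, hx.2⟩

theorem restrict_Icc_add_restrict_Icc {μ : Measure ℝ} [NullSingletonClass μ] (hlc : l ≤ c)
    (hcr : c ≤ r) : μ.restrict (Icc l c) + μ.restrict (Icc c r) = μ.restrict (Icc l r) := by
  rw [← Measure.restrict_union_add_inter (Icc l c) measurableSet_Icc, Icc_union_Icc_eq_Icc hlc hcr,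
    Icc_inter_Icc_eq_singleton hlc hcr, Measure.restrict_singleton', add_zero]

theorem TransportsAs.glueAt {μ : Measure ℝ} [NullSingletonClass μ] {τ1 τ2 p : ℝ → ℝ}
    (hlc : l ≤ c) (hcr : c ≤ r) (hf : TransportsAs f τ1 τ2 p (μ.restrict (Icc l c)))
    (hg : TransportsAs g τ1 τ2 p (μ.restrict (Icc c r))) :
    TransportsAs (glueAt c e f g) τ1 τ2 p (μ.restrict (Icc l r)) := by
  rw [← restrict_Icc_add_restrict_Icc hlc hcr]
  refine (hf.congr_ae ?_).add (hg.congr_ae ?_)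
  · filter_upwards [ae_restrict_mem measurableSet_Icc, Measure.ae_ne _ c] with x hx hxc
    exact (glueAt_of_lt (lt_of_le_of_ne hx.2 hxc)).symm
  · filter_upwards [ae_restrict_mem measurableSet_Icc, Measure.ae_ne _ c] with x hx hxc
    exact (glueAt_of_gt (lt_of_le_of_ne hx.1 hxc.symm)).symm

theorem monotoneOn_glueAt_left (hlc : l ≤ c) (hf : MonotoneOn f (Icc l c))
    (he : ∀ y ∈ Ico l c, f y ≤ e) : MonotoneOn (glueAt c e f g) (Icc l c) := by
  rw [← Ico_insert_right hlc]
  refine monotoneOn_insert_iff.2 ⟨fun y hy _ => ?_, fun y hy hcy => absurd hy.2 hcy.not_gt,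
    (hf.mono Ico_subset_Icc_self).congr fun y hy => (glueAt_of_lt hy.2).symm⟩
  rw [glueAt_self, glueAt_of_lt hy.2]
  exact he y hy

theorem antitoneOn_glueAt_left (hlc : l ≤ c) (hf : AntitoneOn f (Icc l c))
    (he : ∀ y ∈ Ico l c, e ≤ f y) : AntitoneOn (glueAt c e f g) (Icc l c) := by
  rw [← Ico_insert_right hlc]
  refine antitoneOn_insert_iff.2 ⟨fun y hy _ => ?_, fun y hy hcy => absurd hy.2 hcy.not_gt,
    (hf.mono Ico_subset_Icc_self).congr fun y hy => (glueAt_of_lt hy.2).symm⟩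
  rw [glueAt_self, glueAt_of_lt hy.2]
  exact he y hy

theorem monotoneOn_glueAt_right (hcr : c ≤ r) (hg : MonotoneOn g (Icc c r))
    (he : ∀ y ∈ Ioc c r, e ≤ g y) : MonotoneOn (glueAt c e f g) (Icc c r) := by
  rw [← Ioc_insert_left hcr]
  refine monotoneOn_insert_iff.2 ⟨fun y hy hyc => absurd hy.1 hyc.not_gt, fun y hy _ => ?_,
    (hg.mono Ioc_subset_Icc_self).congr fun y hy => (glueAt_of_gt hy.1).symm⟩
  rw [glueAt_self, glueAt_of_gt hy.1]
  exact he y hy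

theorem antitoneOn_glueAt_right (hcr : c ≤ r) (hg : AntitoneOn g (Icc c r))
    (he : ∀ y ∈ Ioc c r, g y ≤ e) : AntitoneOn (glueAt c e f g) (Icc c r) := by
  rw [← Ioc_insert_left hcr]
  refine antitoneOn_insert_iff.2 ⟨fun y hy hyc => absurd hy.1 hyc.not_gt, fun y hy _ => ?_,
    (hg.mono Ioc_subset_Icc_self).congr fun y hy => (glueAt_of_gt hy.1).symm⟩
  rw [glueAt_self, glueAt_of_gt hy.1]
  exact he y hy

end GlueAt

def OrientedOn (b : Prop) (f : ℝ → ℝ) (s : Set ℝ) : Prop :=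
  (b → MonotoneOn f s) ∧ (¬b → AntitoneOn f s)

namespace OrientedOn

variable {b b' : Prop} {f g : ℝ → ℝ} {s t : Set ℝ}

theorem mono (h : OrientedOn b f s) (hts : t ⊆ s) : OrientedOn b f t :=
  ⟨fun hb => (h.1 hb).mono hts, fun hb => (h.2 hb).mono hts⟩

theorem congr (h : OrientedOn b f s) (hfg : EqOn f g s) : OrientedOn b g s :=
  ⟨fun hb => (h.1 hb).congr hfg, fun hb => (h.2 hb).congr hfg⟩

theorem of_iff (h : OrientedOn b f s) (hbb : b ↔ b') : OrientedOn b' f s :=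
  ⟨fun hb => h.1 (hbb.2 hb), fun hb => h.2 (mt hbb.1 hb)⟩

end OrientedOn

theorem orientedOn_Icc_of_run {τ : ℝ → ℝ} {a : ℕ → ℝ} {inc : ℕ → Prop} {s n : ℕ} (hsn : s ≤ n)
    (ha : MonotoneOn a (Icc s n))
    (hτ : ∀ j, s ≤ j → j < n → OrientedOn (inc j) τ (Icc (a j) (a (j + 1))))
    (hrun : ∀ j, s ≤ j → j < n → (inc j ↔ inc s)) : OrientedOn (inc s) τ (Icc (a s) (a n)) :=
  ⟨fun hb => monotoneOn_Icc_of_pieces hsn ha fun j hsj hjn =>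
      ((hτ j hsj hjn).of_iff (hrun j hsj hjn)).1 hb,
    fun hb => antitoneOn_Icc_of_pieces hsn ha fun j hsj hjn =>
      ((hτ j hsj hjn).of_iff (hrun j hsj hjn)).2 hb⟩

section Oriented

variable {b : Prop} {c l r : ℝ} {f g τ1 τ2 p : ℝ → ℝ}

theorem exists_orientedOn_transportsAs {μ : Measure ℝ} [IsFiniteMeasure μ]
    [NullSingletonClass μ] (hlr : l ≤ r) (hpm : Measurable p)
    (hp : ∀ x ∈ Icc l r, p x ∈ Icc 0 1) (hle : ∀ x ∈ Icc l r, τ1 x ≤ τ2 x)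
    (h1 : OrientedOn b τ1 (Icc l r)) (h2 : OrientedOn b τ2 (Icc l r)) :
    ∃ T, Measurable T ∧ IsSelectorOn τ1 τ2 T (Icc l r) ∧ OrientedOn b T (Icc l r) ∧
      TransportsAs T τ1 τ2 p (μ.restrict (Icc l r)) := by
  have hρ : ∀ᵐ x ∂μ.restrict (Icc l r), x ∈ Icc l r := ae_restrict_mem measurableSet_Icc
  by_cases hb : b
  · obtain ⟨T, hT, hsel, htr⟩ := exists_monotone_transportsAs hlr hρ hpm hp hle (h1.1 hb) (h2.1 hb)
    exact ⟨T, hT.measurable, hsel, ⟨fun _ => hT.monotoneOn _, fun h => absurd hb h⟩, htr⟩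
  · obtain ⟨T, hT, hsel, htr⟩ := exists_antitone_transportsAs hlr hρ hpm hp hle (h1.2 hb) (h2.2 hb)
    exact ⟨T, hT.measurable, hsel, ⟨fun h => absurd h hb, fun _ => hT.antitoneOn _⟩, htr⟩

variable [Decidable b]

theorem OrientedOn.glueAt_right (hg : OrientedOn b g (Icc c r)) (hcr : c ≤ r)
    (hτ1 : OrientedOn b τ1 (Icc c r)) (hτ2 : OrientedOn b τ2 (Icc c r))
    (hsel : IsSelectorOn τ1 τ2 g (Icc c r)) :
    OrientedOn b (glueAt c (if b then τ1 c else τ2 c) f g) (Icc c r) := by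
  have hc : c ∈ Icc c r := left_mem_Icc.2 hcr
  refine ⟨fun hb => ?_, fun hb => ?_⟩
  · rw [if_pos hb]
    exact monotoneOn_glueAt_right hcr (hg.1 hb) fun y hy =>
      (hτ1.1 hb hc (Ioc_subset_Icc_self hy) hy.1.le).trans (hsel y (Ioc_subset_Icc_self hy)).1
  · rw [if_neg hb]
    exact antitoneOn_glueAt_right hcr (hg.2 hb) fun y hy =>
      (hsel y (Ioc_subset_Icc_self hy)).2.trans (hτ2.2 hb hc (Ioc_subset_Icc_self hy) hy.1.le)

theorem OrientedOn.glueAt_left {b' : Prop} (hf : OrientedOn b' f (Icc l c)) (hlc : l ≤ c)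
    (hτ1 : OrientedOn b' τ1 (Icc l c)) (hτ2 : OrientedOn b' τ2 (Icc l c))
    (hsel : IsSelectorOn τ1 τ2 f (Icc l c)) (hbb : b' ↔ ¬b) :
    OrientedOn b' (glueAt c (if b then τ1 c else τ2 c) f g) (Icc l c) := by
  have hc : c ∈ Icc l c := right_mem_Icc.2 hlc
  refine ⟨fun hb' => ?_, fun hb' => ?_⟩
  · rw [if_neg (hbb.1 hb')]
    exact monotoneOn_glueAt_left hlc (hf.1 hb') fun y hy =>
      (hsel y (Ico_subset_Icc_self hy)).2.trans (hτ2.1 hb' (Ico_subset_Icc_self hy) hc hy.2.le)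
  · rw [if_pos (not_not.1 (mt hbb.2 hb'))]
    exact antitoneOn_glueAt_left hlc (hf.2 hb') fun y hy =>
      (hτ1.2 hb' (Ico_subset_Icc_self hy) hc hy.2.le).trans (hsel y (Ico_subset_Icc_self hy)).1

end Oriented

section Piecewise

variable {τ1 τ2 : ℝ → ℝ} {a : ℕ → ℝ} {inc : ℕ → Prop} {m s n : ℕ}

theorem orientedOn_pieces_glueAt [Decidable (inc s)] {T₁ T₂ : ℝ → ℝ}
    (ha : StrictMonoOn a (Iic m)) (hsn : s < n) (hn : n ≤ m)
    (hτ : ∀ j < m, OrientedOn (inc j) τ1 (Icc (a j) (a (j + 1)))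
      ∧ OrientedOn (inc j) τ2 (Icc (a j) (a (j + 1))))
    (hrun : ∀ j, s ≤ j → j < n → (inc j ↔ inc s)) (hswitch : 0 < s → ¬(inc (s - 1) ↔ inc s))
    (hτ1 : OrientedOn (inc s) τ1 (Icc (a s) (a n)))
    (hτ2 : OrientedOn (inc s) τ2 (Icc (a s) (a n)))
    (hsel₁ : IsSelectorOn τ1 τ2 T₁ (Icc (a 0) (a s)))
    (hor₁ : ∀ j < s, OrientedOn (inc j) T₁ (Icc (a j) (a (j + 1))))
    (hsel₂ : IsSelectorOn τ1 τ2 T₂ (Icc (a s) (a n)))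
    (hor₂ : OrientedOn (inc s) T₂ (Icc (a s) (a n))) {j : ℕ} (hj : j < n) :
    OrientedOn (inc j) (glueAt (a s) (if inc s then τ1 (a s) else τ2 (a s)) T₁ T₂)
      (Icc (a j) (a (j + 1))) := by
  have hmono : ∀ {i k}, i ≤ k → k ≤ m → a i ≤ a k := fun hik hkm =>
    ha.monotoneOn (mem_Iic.2 (hik.trans hkm)) (mem_Iic.2 hkm) hik
  rcases lt_or_ge j s with hjs | hsj
  · rcases (Nat.succ_le_of_lt hjs).lt_or_eq with hj1 | rfl
    · have hlt : a (j + 1) < a s :=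
        ha (mem_Iic.2 (hj1.le.trans (hsn.le.trans hn))) (mem_Iic.2 (hsn.le.trans hn)) hj1
      exact (hor₁ j hjs).congr fun y hy => (glueAt_of_lt (hy.2.trans_lt hlt)).symm
    · exact (hor₁ j hjs).glueAt_left (hmono j.le_succ (hsn.trans_le hn).le)
        (hτ j (hj.trans_le hn)).1 (hτ j (hj.trans_le hn)).2
        (fun x hx => hsel₁ x ⟨(hmono (Nat.zero_le j) (hj.le.trans hn)).trans hx.1, hx.2⟩)
        (by have := hswitch j.succ_pos; tauto)
  · exact ((hor₂.glueAt_right (hmono hsn.le hn) hτ1 hτ2 hsel₂).mono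
      (Icc_subset_Icc (hmono hsj (hj.le.trans hn)) (hmono hj hn))).of_iff (hrun j hsj hj).symm

theorem exists_piecewise_oriented_selector {μ : Measure ℝ} [IsFiniteMeasure μ]
    [NullSingletonClass μ] {p : ℝ → ℝ} (hpm : Measurable p) (ha : StrictMonoOn a (Iic m))
    (hp : ∀ x ∈ Icc (a 0) (a m), p x ∈ Icc 0 1) (hle : ∀ x ∈ Icc (a 0) (a m), τ1 x ≤ τ2 x)
    (hτ : ∀ j < m, OrientedOn (inc j) τ1 (Icc (a j) (a (j + 1)))
      ∧ OrientedOn (inc j) τ2 (Icc (a j) (a (j + 1))))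
    (hn : n ≤ m) :
    ∃ T, Measurable T ∧ IsSelectorOn τ1 τ2 T (Icc (a 0) (a n)) ∧
      (∀ j < n, OrientedOn (inc j) T (Icc (a j) (a (j + 1)))) ∧
      TransportsAs T τ1 τ2 p (μ.restrict (Icc (a 0) (a n))) := by
  classical
  induction n using Nat.strong_induction_on with
  | _ n ih =>
  have hmono : ∀ {i k}, i ≤ k → k ≤ m → a i ≤ a k := fun hik hkm =>
    ha.monotoneOn (mem_Iic.2 (hik.trans hkm)) (mem_Iic.2 hkm) hik
  rcases Nat.eq_zero_or_pos n with rfl | hn0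
  · refine ⟨fun _ => τ1 (a 0), measurable_const, fun x hx => ?_,
      fun j hj => absurd hj j.not_lt_zero, ?_⟩
    · obtain rfl : x = a 0 := by simpa using hx
      exact ⟨le_rfl, hle _ (left_mem_Icc.2 (hmono (Nat.zero_le m) le_rfl))⟩
    · rw [Icc_self, Measure.restrict_singleton']
      exact fun A _ => by simp
  obtain ⟨s, hsn, hrun, hswitch⟩ := exists_run_start inc hn0
  obtain ⟨T₁, hT₁, hsel₁, hor₁, htr₁⟩ := ih s hsn (hsn.le.trans hn)
  have h0s : a 0 ≤ a s := hmono (Nat.zero_le s) (hsn.le.trans hn)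
  have hsn' : a s ≤ a n := hmono hsn.le hn
  have hrun_sub : Icc (a s) (a n) ⊆ Icc (a 0) (a m) := Icc_subset_Icc h0s (hmono hn le_rfl)
  have hτrun : ∀ {τ : ℝ → ℝ}, (∀ j < m, OrientedOn (inc j) τ (Icc (a j) (a (j + 1)))) →
      OrientedOn (inc s) τ (Icc (a s) (a n)) := fun hτ' =>
    orientedOn_Icc_of_run hsn.le (fun i _ k hk hik => hmono hik (hk.2.trans hn))
      (fun j _ hj => hτ' j (hj.trans_le hn)) hrun
  have hτ1 := hτrun fun j hj => (hτ j hj).1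
  have hτ2 := hτrun fun j hj => (hτ j hj).2
  obtain ⟨T₂, hT₂, hsel₂, hor₂, htr₂⟩ := exists_orientedOn_transportsAs (μ := μ) hsn' hpm
    (fun x hx => hp x (hrun_sub hx)) (fun x hx => hle x (hrun_sub hx)) hτ1 hτ2
  have hle_s := hle (a s) (hrun_sub (left_mem_Icc.2 hsn'))
  refine ⟨glueAt (a s) (if inc s then τ1 (a s) else τ2 (a s)) T₁ T₂, hT₁.glueAt hT₂,
    hsel₁.glueAt hsel₂ (by split_ifs; exacts [⟨le_rfl, hle_s⟩, ⟨hle_s, le_rfl⟩]),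
    fun j hj => orientedOn_pieces_glueAt ha hsn hn hτ hrun hswitch hτ1 hτ2 hsel₁ hor₁ hsel₂ hor₂ hj,
    htr₁.glueAt h0s hsn' htr₂⟩

end Piecewise

theorem random_map_density_is_selector_density_general
    (m : ℕ) (a : ℕ → ℝ) (ha0 : a 0 = 0) (ham : a m = 1)
    (hamono : ∀ i < m, a i < a (i + 1))
    (τ1 τ2 : ℝ → ℝ)
    (hle : ∀ x ∈ Set.Icc (0:ℝ) 1, τ1 x ≤ τ2 x)
    (hsamemono : ∀ j < m,
        (StrictMonoOn τ1 (Set.Icc (a j) (a (j + 1)))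
          ∧ StrictMonoOn τ2 (Set.Icc (a j) (a (j + 1))))
      ∨ (StrictAntiOn τ1 (Set.Icc (a j) (a (j + 1)))
          ∧ StrictAntiOn τ2 (Set.Icc (a j) (a (j + 1)))))
    (p : ℝ → ℝ) (hpm : Measurable p) (hp01 : ∀ x ∈ Set.Icc (0:ℝ) 1, p x ∈ Set.Icc (0:ℝ) 1)
    (f : ℝ → ℝ) (hfd : IsDensity f)
    (hinv : RMInvariant τ1 τ2 p (densMeasure f)) :
    ∃ T : ℝ → ℝ, Measurable T ∧
      (∀ x ∈ Set.Icc (0:ℝ) 1, τ1 x ≤ T x ∧ T x ≤ τ2 x) ∧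
      (∀ j < m, MonotoneOn T (Set.Icc (a j) (a (j + 1)))
        ∨ AntitoneOn T (Set.Icc (a j) (a (j + 1)))) ∧
      (∀ A : Set ℝ, MeasurableSet A → densMeasure f (T ⁻¹' A) = densMeasure f A) := by
  have : IsFiniteMeasure (densMeasure f) := isFiniteMeasure_withDensity_ofReal
    (Integrable.of_integral_ne_zero (by rw [leb01, hfd.2.2]; exact one_ne_zero)).2
  have : NullSingletonClass (densMeasure f) := by unfold densMeasure leb01; infer_instance
  have hsupp : (densMeasure f).restrict (Icc 0 1) = densMeasure f :=
    Measure.restrict_eq_self_of_ae_mem <|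
      (withDensity_absolutelyContinuous _ _).ae_le (ae_restrict_mem measurableSet_Icc)
  set inc : ℕ → Prop := fun j =>
    StrictMonoOn τ1 (Icc (a j) (a (j + 1))) ∧ StrictMonoOn τ2 (Icc (a j) (a (j + 1)))
  have hτ : ∀ j < m, OrientedOn (inc j) τ1 (Icc (a j) (a (j + 1)))
      ∧ OrientedOn (inc j) τ2 (Icc (a j) (a (j + 1))) := fun j hj =>
    ⟨⟨fun h => h.1.monotoneOn, fun h => ((hsamemono j hj).resolve_left h).1.antitoneOn⟩,
      ⟨fun h => h.2.monotoneOn, fun h => ((hsamemono j hj).resolve_left h).2.antitoneOn⟩⟩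
  obtain ⟨T, hT, hsel, hor, htr⟩ := exists_piecewise_oriented_selector (μ := densMeasure f)
    hpm (strictMonoOn_Iic_of_lt_succ hamono) (by rwa [ha0, ham]) (by rwa [ha0, ham]) hτ le_rfl
  rw [ha0, ham] at hsel htr
  rw [hsupp] at htr
  exact ⟨T, hT, hsel, fun j hj => (em (inc j)).imp (hor j hj).1 (hor j hj).2,
    fun A hA => (htr A hA).trans (hinv A hA).symm⟩

/-- (Theorem 3 of the paper.)  If `τ1 ≤ τ2` are piecewise `C¹`, piecewise
expanding (slope `> 2`) boundary maps having the same monotonicity on the intervals of a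
common partition, and `f` is an a.e. positive invariant density of the random map
`R = {τ1, τ2; p, 1-p}`, then `f` is also the invariant density of some selector `T` between
`τ1` and `τ2`, monotone on each partition interval. -/
theorem random_map_density_is_selector_density
    (m : ℕ) (hm : 0 < m) (a : ℕ → ℝ) (ha0 : a 0 = 0) (ham : a m = 1)
    (hamono : ∀ i < m, a i < a (i + 1))
    (τ1 τ2 : ℝ → ℝ)
    (hmap1 : MapsTo τ1 (Set.Icc (0:ℝ) 1) (Set.Icc (0:ℝ) 1))
    (hmap2 : MapsTo τ2 (Set.Icc (0:ℝ) 1) (Set.Icc (0:ℝ) 1))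
    (hle : ∀ x ∈ Set.Icc (0:ℝ) 1, τ1 x ≤ τ2 x)
    (hC1 : ∀ j < m, ContDiffOn ℝ 1 τ1 (Set.Icc (a j) (a (j + 1)))
      ∧ ContDiffOn ℝ 1 τ2 (Set.Icc (a j) (a (j + 1))))
    (hsamemono : ∀ j < m,
        (StrictMonoOn τ1 (Set.Icc (a j) (a (j + 1)))
          ∧ StrictMonoOn τ2 (Set.Icc (a j) (a (j + 1))))
      ∨ (StrictAntiOn τ1 (Set.Icc (a j) (a (j + 1)))
          ∧ StrictAntiOn τ2 (Set.Icc (a j) (a (j + 1)))))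
    (hslope : ∀ j < m, ∀ x ∈ Set.Icc (a j) (a (j + 1)),
        2 < |derivWithin τ1 (Set.Icc (a j) (a (j + 1))) x|
      ∧ 2 < |derivWithin τ2 (Set.Icc (a j) (a (j + 1))) x|)
    (p : ℝ → ℝ) (hpm : Measurable p) (hp01 : ∀ x ∈ Set.Icc (0:ℝ) 1, p x ∈ Set.Icc (0:ℝ) 1)
    (f : ℝ → ℝ) (hfd : IsDensity f) (hfpos : ∀ᵐ x ∂leb01, 0 < f x)
    (hinv : RMInvariant τ1 τ2 p (densMeasure f)) :
    ∃ T : ℝ → ℝ, Measurable T ∧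
      (∀ x ∈ Set.Icc (0:ℝ) 1, τ1 x ≤ T x ∧ T x ≤ τ2 x) ∧
      (∀ j < m, MonotoneOn T (Set.Icc (a j) (a (j + 1)))
        ∨ AntitoneOn T (Set.Icc (a j) (a (j + 1)))) ∧
      (∀ A : Set ℝ, MeasurableSet A → densMeasure f (T ⁻¹' A) = densMeasure f A) :=
  random_map_density_is_selector_density_general m a ha0 ham hamono τ1 τ2 hle hsamemono p hpm hp01 f
    hfd hinv
end

section
/- Let τ1, τ2 : [0,1] → [0,1] be Borel measurable maps. Let p⁽ⁿ⁾, p : [0,1] → [0,1] be Borel measurable with p⁽ⁿ⁾ → p λ_Leb-almost everywhere. For each n, let f⁽ⁿ⁾ be a density invariant under the random map R⁽ⁿ⁾ = {τ1, τ2; p⁽ⁿ⁾, 1−p⁽ⁿ⁾}, and suppose f⁽ⁿ⁾ → f in L¹([0,1], λ_Leb). Then f is a density invariant under R = {τ1, τ2; p, 1−p}. -/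
open MeasureTheory Set Filter
open scoped ENNReal

open scoped Topology

/-!
Both sides of the invariance equation `μₙ A = ∫ P_{pₙ}(x, A) dμₙ(x)`, where `μₙ = fₙ λ`, are
integrals of weights bounded by `1` against `fₙ λ`. Replacing `fₙ` by `f` therefore changes them by
at most `‖fₙ - f‖₁ → 0`, and against the fixed integrable density `f` the weights
`P_{pₙ}(·, A) → P_p(·, A)` converge a.e. and boundedly, so dominated convergence applies. That `f`
is again a density holds because `L¹` convergence preserves a.e. nonnegativity and integrals.
-/

theorem ENNReal.tendsto_of_le_add_of_le_add {a b ε : ℕ → ℝ≥0∞} {L : ℝ≥0∞} (hL : L ≠ ∞)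
    (hab : ∀ n, a n ≤ b n + ε n) (hba : ∀ n, b n ≤ a n + ε n)
    (hb : Tendsto b atTop (𝓝 L)) (hε : Tendsto ε atTop (𝓝 0)) :
    Tendsto a atTop (𝓝 L) := by
  have hupper : Tendsto (fun n => b n + ε n) atTop (𝓝 L) := by simpa using hb.add hε
  have hlower : Tendsto (fun n => b n - ε n) atTop (𝓝 L) := by
    simpa using ENNReal.Tendsto.sub hb hε (Or.inl hL)
  exact tendsto_of_tendsto_of_tendsto_of_le_of_le hlower hupper
    (fun n => tsub_le_iff_right.2 (hba n)) hab

section L1Limit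

variable {α : Type*} [MeasurableSpace α] {μ : Measure α} {f : ℕ → α → ℝ} {g : α → ℝ}

theorem integrable_of_tendsto_eLpNorm_one (hf : ∀ n, Integrable (f n) μ)
    (hg : AEStronglyMeasurable g μ)
    (hfg : Tendsto (fun n => eLpNorm (f n - g) 1 μ) atTop (𝓝 0)) : Integrable g μ := by
  obtain ⟨n, hn⟩ := (hfg.eventually_lt_const ENNReal.zero_lt_top).exists
  have hdiff : Integrable (f n - g) μ :=
    memLp_one_iff_integrable.1 ⟨(hf n).aestronglyMeasurable.sub hg, hn⟩
  simpa using (hf n).sub hdiff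

theorem ae_nonneg_of_tendsto_eLpNorm_one (hf_nonneg : ∀ n, 0 ≤ᵐ[μ] f n)
    (hf : ∀ n, AEStronglyMeasurable (f n) μ) (hg : AEStronglyMeasurable g μ)
    (hfg : Tendsto (fun n => eLpNorm (f n - g) 1 μ) atTop (𝓝 0)) : 0 ≤ᵐ[μ] g := by
  obtain ⟨ns, -, hns⟩ :=
    (tendstoInMeasure_of_tendsto_eLpNorm one_ne_zero hf hg hfg).exists_seq_tendsto_ae
  filter_upwards [hns, ae_all_iff.2 fun i => hf_nonneg (ns i)] with x hx hx_nonneg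
  exact ge_of_tendsto' hx hx_nonneg

theorem lintegral_ofReal_mul_le_add_eLpNorm {w : α → ℝ≥0∞} (hw : ∀ x, w x ≤ 1)
    {a b : α → ℝ} (ha : AEMeasurable a μ) (hb : AEMeasurable b μ) :
    ∫⁻ x, ENNReal.ofReal (a x) * w x ∂μ
      ≤ ∫⁻ x, ENNReal.ofReal (b x) * w x ∂μ + eLpNorm (a - b) 1 μ := by
  rw [eLpNorm_one_eq_lintegral_enorm, ← lintegral_add_right' _ (ha.sub hb).enorm]
  refine lintegral_mono fun x => ?_
  have hab : ENNReal.ofReal (a x) ≤ ENNReal.ofReal (b x) + ‖a x - b x‖ₑ := by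
    rw [Real.enorm_eq_ofReal_abs]
    exact (ENNReal.ofReal_le_ofReal (by linarith [le_abs_self (a x - b x)])).trans
      ENNReal.ofReal_add_le
  calc ENNReal.ofReal (a x) * w x
      ≤ (ENNReal.ofReal (b x) + ‖a x - b x‖ₑ) * w x := by gcongr
    _ ≤ ENNReal.ofReal (b x) * w x + ‖a x - b x‖ₑ := by
      rw [add_mul]
      gcongr
      exact mul_le_of_le_one_right' (hw x)

theorem tendsto_lintegral_withDensity_ofReal {w : ℕ → α → ℝ≥0∞} {w' : α → ℝ≥0∞}
    (hw : ∀ n, AEMeasurable (w n) μ) (hw_le : ∀ n x, w n x ≤ 1)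
    (hw_lim : ∀ᵐ x ∂μ, Tendsto (fun n => w n x) atTop (𝓝 (w' x)))
    (hf : ∀ n, AEMeasurable (f n) μ) (hg : Integrable g μ)
    (hfg : Tendsto (fun n => eLpNorm (f n - g) 1 μ) atTop (𝓝 0)) :
    Tendsto (fun n => ∫⁻ x, w n x ∂μ.withDensity (fun x => ENNReal.ofReal (f n x))) atTop
      (𝓝 (∫⁻ x, w' x ∂μ.withDensity (fun x => ENNReal.ofReal (g x)))) := by
  have hg_meas : AEMeasurable g μ := hg.aemeasurable
  have hconv : ∀ h : α → ℝ, AEMeasurable h μ → ∀ v : α → ℝ≥0∞,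
      ∫⁻ x, v x ∂μ.withDensity (fun x => ENNReal.ofReal (h x))
        = ∫⁻ x, ENNReal.ofReal (h x) * v x ∂μ := fun h hh v =>
    lintegral_withDensity_eq_lintegral_mul_non_measurable₀ _ hh.ennreal_ofReal
      (ae_of_all _ fun _ => ENNReal.ofReal_lt_top) v
  rw [hconv g hg_meas]
  refine Tendsto.congr (fun n => (hconv _ (hf n) (w n)).symm) ?_
  have hg_fin : ∫⁻ x, ENNReal.ofReal (g x) ∂μ ≠ ∞ := hg.lintegral_lt_top.ne
  have hw'_le : ∀ᵐ x ∂μ, w' x ≤ 1 := by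
    filter_upwards [hw_lim] with x hx using le_of_tendsto' hx fun n => hw_le n x
  have hlim_fin : ∫⁻ x, ENNReal.ofReal (g x) * w' x ∂μ ≠ ∞ := by
    refine ne_top_of_le_ne_top hg_fin (lintegral_mono_ae ?_)
    filter_upwards [hw'_le] with x hx using mul_le_of_le_one_right' hx
  have hdom : Tendsto (fun n => ∫⁻ x, ENNReal.ofReal (g x) * w n x ∂μ) atTop
      (𝓝 (∫⁻ x, ENNReal.ofReal (g x) * w' x ∂μ)) := by
    refine tendsto_lintegral_of_dominated_convergence' (fun x => ENNReal.ofReal (g x))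
      (fun n => hg_meas.ennreal_ofReal.mul (hw n))
      (fun n => ae_of_all _ fun x => mul_le_of_le_one_right' (hw_le n x)) hg_fin ?_
    filter_upwards [hw_lim] with x hx
    exact ENNReal.Tendsto.const_mul hx (Or.inr ENNReal.ofReal_ne_top)
  refine ENNReal.tendsto_of_le_add_of_le_add hlim_fin (fun n => ?_) (fun n => ?_) hdom hfg
  · exact lintegral_ofReal_mul_le_add_eLpNorm (hw_le n) (hf n) hg_meas
  · rw [← eLpNorm_neg, neg_sub]
    exact lintegral_ofReal_mul_le_add_eLpNorm (hw_le n) hg_meas (hf n)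

end L1Limit

/-- The transition probability `P(x, A)` of the random map `{τ1, τ2; p, 1 - p}`: the integrand
of `RMInvariant`. -/
noncomputable def rmTransition (τ1 τ2 p : ℝ → ℝ) (A : Set ℝ) (x : ℝ) : ℝ≥0∞ :=
  ENNReal.ofReal (p x) * A.indicator (fun _ => (1:ℝ≥0∞)) (τ1 x)
    + ENNReal.ofReal (1 - p x) * A.indicator (fun _ => (1:ℝ≥0∞)) (τ2 x)

section RandomMap

variable {τ1 τ2 : ℝ → ℝ} {A : Set ℝ}

theorem rmTransition_le_one {p : ℝ → ℝ} {x : ℝ} (hp : p x ∈ Icc (0:ℝ) 1) :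
    rmTransition τ1 τ2 p A x ≤ 1 :=
  calc rmTransition τ1 τ2 p A x ≤ ENNReal.ofReal (p x) + ENNReal.ofReal (1 - p x) := by
        unfold rmTransition
        gcongr <;> exact mul_le_of_le_one_right' (indicator_le_self' (fun _ _ => zero_le_one) _)
    _ = 1 := by rw [← ENNReal.ofReal_add hp.1 (sub_nonneg.2 hp.2)]; simp

theorem measurable_rmTransition (hτ1 : Measurable τ1) (hτ2 : Measurable τ2) {p : ℝ → ℝ}
    (hp : Measurable p) (hA : MeasurableSet A) : Measurable (rmTransition τ1 τ2 p A) := by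
  unfold rmTransition
  fun_prop (disch := exact hA)

theorem tendsto_rmTransition {p : ℕ → ℝ → ℝ} {q : ℝ → ℝ} {x : ℝ}
    (hpq : Tendsto (fun n => p n x) atTop (𝓝 (q x))) :
    Tendsto (fun n => rmTransition τ1 τ2 (p n) A x) atTop (𝓝 (rmTransition τ1 τ2 q A x)) := by
  have hfin : ∀ y, A.indicator (fun _ => (1:ℝ≥0∞)) y ≠ ∞ := fun y => by
    by_cases hy : y ∈ A <;> simp [hy]
  exact (ENNReal.Tendsto.mul_const (ENNReal.tendsto_ofReal hpq) (Or.inr (hfin _))).add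
    (ENNReal.Tendsto.mul_const (ENNReal.tendsto_ofReal (tendsto_const_nhds.sub hpq))
      (Or.inr (hfin _)))

end RandomMap

theorem limit_density_invariant_under_limit_random_map_general
    (τ1 τ2 : ℝ → ℝ) (hτ1 : Measurable τ1) (hτ2 : Measurable τ2)
    (p : ℕ → ℝ → ℝ) (plim : ℝ → ℝ)
    (hpm : ∀ n, Measurable (p n))
    (hp01 : ∀ n, ∀ x, p n x ∈ Set.Icc (0:ℝ) 1)
    (hae : ∀ᵐ x ∂leb01, Filter.Tendsto (fun n => p n x) Filter.atTop (nhds (plim x)))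
    (f : ℕ → ℝ → ℝ) (flim : ℝ → ℝ)
    (hfd : ∀ n, IsDensity (f n))
    (hfinv : ∀ n, RMInvariant τ1 τ2 (p n) (densMeasure (f n)))
    (hflimm : Measurable flim)
    (hL1 : Filter.Tendsto (fun n => eLpNorm (fun x => f n x - flim x) 1 leb01)
      Filter.atTop (nhds 0)) :
    (∀ᵐ x ∂leb01, 0 ≤ flim x) ∧ (∫ x in Set.Icc (0:ℝ) 1, flim x = 1) ∧
    RMInvariant τ1 τ2 plim (densMeasure flim) := by
  have hfg : Tendsto (fun n => eLpNorm (f n - flim) 1 leb01) atTop (𝓝 0) := hL1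
  have hf_int : ∀ n, Integrable (f n) leb01 := fun n => integrable_of_integral_eq_one (hfd n).2.2
  have hflim_int : Integrable flim leb01 :=
    integrable_of_tendsto_eLpNorm_one hf_int hflimm.aestronglyMeasurable hfg
  have hflim_integral : ∫ x, flim x ∂leb01 = 1 :=
    tendsto_nhds_unique (tendsto_integral_of_L1' flim hflimm.aestronglyMeasurable
      (Eventually.of_forall hf_int) hfg) (tendsto_const_nhds.congr fun n => ((hfd n).2.2).symm)
  refine ⟨ae_nonneg_of_tendsto_eLpNorm_one (fun n => ae_of_all _ (hfd n).2.1)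
    (fun n => (hf_int n).1) hflimm.aestronglyMeasurable hfg, hflim_integral, fun A hA => ?_⟩
  have hmass : Tendsto (fun n => densMeasure (f n) A) atTop (𝓝 (densMeasure flim A)) := by
    have h := tendsto_lintegral_withDensity_ofReal (w := fun _ => A.indicator 1)
      (fun _ => (measurable_one.indicator hA).aemeasurable)
      (fun _ => indicator_le_self' fun _ _ => zero_le_one) (ae_of_all _ fun _ => tendsto_const_nhds)
      (fun n => (hfd n).1.aemeasurable) hflim_int hfg
    simp only [lintegral_indicator_one hA] at h
    exact h
  have hintegral : Tendsto (fun n => ∫⁻ x, rmTransition τ1 τ2 (p n) A x ∂densMeasure (f n))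
      atTop (𝓝 (∫⁻ x, rmTransition τ1 τ2 plim A x ∂densMeasure flim)) :=
    tendsto_lintegral_withDensity_ofReal
      (fun n => (measurable_rmTransition hτ1 hτ2 (hpm n) hA).aemeasurable)
      (fun n _ => rmTransition_le_one (hp01 n _)) (hae.mono fun _ => tendsto_rmTransition)
      (fun n => (hfd n).1.aemeasurable) hflim_int hfg
  exact tendsto_nhds_unique (hmass.congr fun n => hfinv n A hA) hintegral

/-- (Continuity theorem, fixed maps.)  If `pₙ → p` a.e., each `fₙ` is a
density invariant under `Rₙ = {τ1, τ2; pₙ, 1−pₙ}` and `fₙ → f` in `L¹`, then `f` is a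
density invariant under `R = {τ1, τ2; p, 1−p}`. -/
theorem limit_density_invariant_under_limit_random_map
    (τ1 τ2 : ℝ → ℝ) (hτ1 : Measurable τ1) (hτ2 : Measurable τ2)
    (hτ1m : MapsTo τ1 (Set.Icc (0:ℝ) 1) (Set.Icc (0:ℝ) 1))
    (hτ2m : MapsTo τ2 (Set.Icc (0:ℝ) 1) (Set.Icc (0:ℝ) 1))
    (p : ℕ → ℝ → ℝ) (plim : ℝ → ℝ)
    (hpm : ∀ n, Measurable (p n)) (hplimm : Measurable plim)
    (hp01 : ∀ n, ∀ x, p n x ∈ Set.Icc (0:ℝ) 1) (hplim01 : ∀ x, plim x ∈ Set.Icc (0:ℝ) 1)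
    (hae : ∀ᵐ x ∂leb01, Filter.Tendsto (fun n => p n x) Filter.atTop (nhds (plim x)))
    (f : ℕ → ℝ → ℝ) (flim : ℝ → ℝ)
    (hfd : ∀ n, IsDensity (f n))
    (hfinv : ∀ n, RMInvariant τ1 τ2 (p n) (densMeasure (f n)))
    (hflimm : Measurable flim)
    (hL1 : Filter.Tendsto (fun n => eLpNorm (fun x => f n x - flim x) 1 leb01)
      Filter.atTop (nhds 0)) :
    (∀ᵐ x ∂leb01, 0 ≤ flim x) ∧ (∫ x in Set.Icc (0:ℝ) 1, flim x = 1) ∧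
    RMInvariant τ1 τ2 plim (densMeasure flim) :=
  limit_density_invariant_under_limit_random_map_general τ1 τ2 hτ1 hτ2 p plim hpm hp01 hae f flim
    hfd hfinv hflimm hL1
end

section
/- Work in the real Banach space E = L¹([0,1], λ_Leb). Let (S_n) be a sequence of compact convex subsets of E whose union is contained in a compact convex subset K of E. For each n let X_n be the set of extreme points of S_n, and set S = Ls S_n and X = Ls X_n (Kuratowski limits superior). Then S is contained in the closed convex hull of X; if, in addition, S is convex, then S equals the closed convex hull of X, so that X contains all the extreme points of S. -/
open MeasureTheory Set Filter
open scoped ENNReal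

/-- The real Banach space `E = L¹([0,1], λ_Leb)`. -/
noncomputable abbrev L1space := MeasureTheory.Lp ℝ 1 leb01

/-- Kuratowski limit superior of a sequence of subsets of `L¹([0,1])`:
the set of points every neighbourhood of which intersects infinitely many of the sets. -/
def KurLimsup (A : ℕ → Set L1space) : Set L1space :=
  {s | ∀ U ∈ nhds s, {n : ℕ | (A n ∩ U).Nonempty}.Infinite}

lemma isClosed_kurLimsup (A : ℕ → Set L1space) : IsClosed (KurLimsup A) := by
  refine isClosed_of_closure_subset ?_
  intro s hs U hU
  obtain ⟨V, hVU, hVopen, hsV⟩ := mem_nhds_iff.mp hU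
  obtain ⟨t, htV, htK⟩ := mem_closure_iff.mp hs V hVopen hsV
  exact (htK V (hVopen.mem_nhds htV)).mono fun n hn =>
    hn.mono (inter_subset_inter_right _ hVU)

/-- (Modified Theorem 2 of Jerison, used in Section 8.)  If `(Sₙ)` is a
sequence of compact convex subsets of `L¹([0,1])` whose union lies in a compact convex set,
`Xₙ` is the set of extreme points of `Sₙ`, `S = Ls Sₙ` and `X = Ls Xₙ`, then `S` is
contained in the closed convex hull of `X`; if moreover `S` is convex, then `S` equals the
closed convex hull of `X`, so `X` contains all extreme points of `S`. -/
theorem kuratowski_limsup_extreme_points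
    (S : ℕ → Set L1space) (K : Set L1space)
    (hK : IsCompact K) (hKconv : Convex ℝ K)
    (hScomp : ∀ n, IsCompact (S n)) (hSconv : ∀ n, Convex ℝ (S n))
    (hSK : ∀ n, S n ⊆ K)
    (X : ℕ → Set L1space) (hX : ∀ n, X n = (S n).extremePoints ℝ) :
    KurLimsup S ⊆ closure (convexHull ℝ (KurLimsup X)) ∧
    (Convex ℝ (KurLimsup S) →
      KurLimsup S = closure (convexHull ℝ (KurLimsup X))) := by
  have hXK : ∀ n, X n ⊆ K := fun n => by
    rw [hX n]; exact extremePoints_subset.trans (hSK n)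
  have hKM : ∀ n, closure (convexHull ℝ (X n)) = S n := fun n => by
    rw [hX n]; exact closure_convexHull_extremePoints (hScomp n) (hSconv n)
  have part1 : KurLimsup S ⊆ closure (convexHull ℝ (KurLimsup X)) := by
    intro s hs
    by_contra hsC
    obtain ⟨f, u, hfC, hfs⟩ := geometric_hahn_banach_closed_point
      (convex_convexHull ℝ _).closure isClosed_closure hsC
    set U : Set L1space := f ⁻¹' Ioi u with hUdef
    have hUopen : IsOpen U := isOpen_Ioi.preimage f.continuous
    have hsU : s ∈ U := hfs
    have hN : {n | (S n ∩ U).Nonempty}.Infinite := hs U (hUopen.mem_nhds hsU)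
    have key : ∀ n, (S n ∩ U).Nonempty → ∃ x ∈ X n, u < f x := by
      rintro n ⟨y, hyS, hyU⟩
      by_contra h
      push_neg at h
      have hsub : S n ⊆ {z | f z ≤ u} := by
        rw [← hKM n]
        refine closure_minimal (convexHull_min h ?_) ?_
        · exact convex_halfSpace_le (f.toLinearMap.isLinear) u
        · exact isClosed_le f.continuous continuous_const
      have hfy : f y ≤ u := hsub hyS
      exact absurd (show u < f y from hyU) (not_lt.2 hfy)
    let e := hN.natEmbedding
    have hprop : ∀ k, ∃ x ∈ X ((e k : ℕ)), u < f x := fun k => key _ (e k).2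
    choose x hxX hxf using hprop
    have hxK : ∀ k, x k ∈ K := fun k => hXK _ (hxX k)
    obtain ⟨z, hzK, φ, hφ, hzt⟩ := hK.tendsto_subseq hxK
    have hzX : z ∈ KurLimsup X := by
      intro V hV
      have hev : ∀ᶠ k in atTop, (x ∘ φ) k ∈ V := hzt hV
      obtain ⟨a, ha⟩ := eventually_atTop.mp hev
      have hIa : ({k : ℕ | (x ∘ φ) k ∈ V}).Infinite :=
        (Set.Ici_infinite a).mono ha
      have hinj : Function.Injective (fun k => ((e (φ k) : ℕ))) := by
        intro a b hab
        exact hφ.injective (e.injective (Subtype.val_injective hab))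
      have himg : ((fun k => ((e (φ k) : ℕ))) '' {k | (x ∘ φ) k ∈ V}).Infinite :=
        hIa.image (hinj.injOn)
      refine himg.mono ?_
      rintro _ ⟨k, hk, rfl⟩
      exact ⟨x (φ k), hxX (φ k), hk⟩
    have hzC : z ∈ closure (convexHull ℝ (KurLimsup X)) :=
      subset_closure (subset_convexHull ℝ _ hzX)
    have hle : u ≤ f z := by
      refine ge_of_tendsto' ((f.continuous.tendsto z).comp hzt) fun k => ?_
      exact (hxf (φ k)).le
    exact absurd (hfC z hzC) (not_lt.2 hle)
  refine ⟨part1, fun hconv => ?_⟩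
  refine Set.Subset.antisymm part1 ?_
  have hXS : KurLimsup X ⊆ KurLimsup S := by
    intro t ht U hU
    refine (ht U hU).mono fun n hn => hn.mono (inter_subset_inter_left _ ?_)
    rw [hX n]; exact extremePoints_subset
  calc closure (convexHull ℝ (KurLimsup X))
      ⊆ closure (convexHull ℝ (KurLimsup S)) := closure_mono (convexHull_mono hXS)
    _ = closure (KurLimsup S) := by rw [hconv.convexHull_eq]
    _ = KurLimsup S := (isClosed_kurLimsup S).closure_eq
end

section
/- Let a ∈ (0,1) and b1, b2 ∈ ℝ with 0 < b1 < 1/a < b2 < 2/a. Set a_i = (1 − a·b_i)/a² and define the quadratic boundary branches τ_i(x) = a_i·x² + b_i·x for i = 1,2 (so τ_i(0) = 0 and τ_i(a) = 1). Let A = b1·(1 − a·b2)/(b1 − b2), B = 2·(1 − a·b1)·(1 − a·b2)/((b1 − b2)·a²), and p(x) = A + B·x. Then for all real x and y, p(x)·τ2′(y) = p(y)·τ1′(x) − τ1′(x) + a·τ1′(x)·τ2′(y). In particular, taking y = τ21(x) where τ21 = τ2⁻¹ ∘ τ1, the linear function p satisfies the functional equation p(x) = p(τ21(x))·τ21′(x)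 − (τ21′(x) − a·τ1′(x)) on [0,a], which is the condition for the random map {τ1, τ2; p, 1−p} (with the common linear branch of slope 1/(1−a) on [a,1]) to preserve the density f ≡ 1 of the triangle-map selector. -/
open Set

/-- For the quadratic boundary branches `τᵢ(x) = aᵢx² + bᵢx` with
`aᵢ = (1 − a·bᵢ)/a²`, the linear function `p(x) = A + Bx` with
`A = b₁(1 − a·b₂)/(b₁ − b₂)`, `B = 2(1 − a·b₁)(1 − a·b₂)/((b₁ − b₂)a²)` satisfies the
polynomial identity `p(x)·τ₂'(y) = p(y)·τ₁'(x) − τ₁'(x) + a·τ₁'(x)·τ₂'(y)` for all `x, y`;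
in particular, at `y = τ21(x)` (where `τ21 = τ₂⁻¹ ∘ τ₁`) it satisfies the functional
equation `p(x) = p(τ21(x))·τ21'(x) − (τ21'(x) − a·τ₁'(x))` on `[0,a]`. -/
theorem linear_probability_solves_functional_equation
    (a b1 b2 : ℝ) (ha : a ∈ Set.Ioo (0:ℝ) 1)
    (hb1 : 0 < b1) (hb12 : b1 < 1 / a) (hb2 : 1 / a < b2) (hb22 : b2 < 2 / a)
    (a1 a2 A B : ℝ)
    (ha1 : a1 = (1 - a * b1) / a ^ 2) (ha2 : a2 = (1 - a * b2) / a ^ 2)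
    (hA : A = b1 * (1 - a * b2) / (b1 - b2))
    (hB : B = 2 * (1 - a * b1) * (1 - a * b2) / ((b1 - b2) * a ^ 2))
    (τ1 τ2 τ1' τ2' p : ℝ → ℝ)
    (hτ1 : τ1 = fun x => a1 * x ^ 2 + b1 * x) (hτ2 : τ2 = fun x => a2 * x ^ 2 + b2 * x)
    (hτ1' : τ1' = fun x => 2 * a1 * x + b1) (hτ2' : τ2' = fun x => 2 * a2 * x + b2)
    (hp : p = fun x => A + B * x) :
    (∀ x y : ℝ, p x * τ2' y = p y * τ1' x - τ1' x + a * (τ1' x * τ2' y)) ∧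
    ∀ τ21 τ21' : ℝ → ℝ,
      (∀ x ∈ Set.Icc 0 a, τ21 x ∈ Set.Icc 0 a ∧ τ2 (τ21 x) = τ1 x) →
      (∀ x ∈ Set.Icc 0 a, τ21' x = τ1' x / τ2' (τ21 x)) →
      ∀ x ∈ Set.Icc 0 a, p x = p (τ21 x) * τ21' x - (τ21' x - a * τ1' x) := by
  obtain ⟨ha0, ha1'⟩ := ha
  have hane : a ≠ 0 := ne_of_gt ha0
  have hbb : b1 - b2 ≠ 0 := by
    have : b1 < b2 := lt_trans hb12 hb2
    linarith
  have key : ∀ x y : ℝ, p x * τ2' y = p y * τ1' x - τ1' x + a * (τ1' x * τ2' y) := by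
    intro x y
    subst hp hτ1' hτ2' ha1 ha2 hA hB
    simp only
    field_simp
    ring
  refine ⟨key, ?_⟩
  intro τ21 τ21' h1 h2 x hx
  obtain ⟨hy, -⟩ := h1 x hx
  have hc : a2 * a ^ 2 = 1 - a * b2 := by
    rw [ha2]; field_simp
  have hab2 : 1 < a * b2 := by
    rw [div_lt_iff₀ ha0] at hb2; linarith [mul_comm a b2]
  have hab2' : a * b2 < 2 := by
    rw [lt_div_iff₀ ha0] at hb22; linarith [mul_comm a b2]
  have hcneg : a2 ≤ 0 := by nlinarith [sq_nonneg a]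
  have hτ2pos : 0 < τ2' (τ21 x) := by
    rw [hτ2']
    simp only
    have h0 : (0:ℝ) ≤ τ21 x := hy.1
    have h1' : τ21 x ≤ a := hy.2
    have hmul : a2 * a ≤ a2 * τ21 x := mul_le_mul_of_nonpos_left h1' hcneg
    nlinarith
  have hne : τ2' (τ21 x) ≠ 0 := ne_of_gt hτ2pos
  have h := key x (τ21 x)
  rw [h2 x hx]
  field_simp
  linear_combination h
end

section
/- Define τ1, τ2 : [0,1] → [0,1] by: τ1(x) = 2x on [0, 1/10], τ1(x) = 8x − 3/5 on (1/10, 1/5), τ2(x) = 8x on [0, 1/10], τ2(x) = 2x + 3/5 on (1/10, 1/5), and, for both k = 1,2, τ_k(x) = 5x − 1 on [1/5, 2/5), 5x − 2 on [2/5, 3/5), 5x − 3 on [3/5, 4/5), 5x − 4 on [4/5, 1] (i.e. τ_k(x) = 5x mod 1 on [1/5,1]). Let f = (30/31)·1_{[0,3/5)} + (65/62)·1_{[3/5,1]} (a probability density). Then there is NO Borel measurable function p : [0,1] → [0,1] such that the density f is invariant under the position-dependent random map R = {τ1, τ2; p, 1−p}. -/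
/-!
Test invariance on `A = [3/5, 4/5)`. Up to the four branches of `5x mod 1`, its preimage is
`[3/40, 1/10)` (reached by `τ2` only) and `S = [3/20, 7/40)` (reached by `τ1` only, with
weight `p`); the `f`-masses balance only if `p = 1` a.e. on `S`. Next test on
`A' = [9/10, 19/20)`, which `τ2` reaches from `S`, now with weight `1 - p = 0`: what is left of
the preimage has mass at most `5/124 + 3/496`, less than the `f`-mass `13/248` of `A'`.
-/

open MeasureTheory Set Filter
open scoped ENNReal

noncomputable def fiveXmod1 : ℝ → ℝ := fun x =>
  if x < 2/5 then 5*x - 1 else if x < 3/5 then 5*x - 2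
  else if x < 4/5 then 5*x - 3 else 5*x - 4

/-- `τ1` of the paper. -/
noncomputable def tauLower : ℝ → ℝ := fun x =>
  if x ≤ 1/10 then 2*x else if x < 1/5 then 8*x - 3/5 else fiveXmod1 x

/-- `τ2` of the paper. -/
noncomputable def tauUpper : ℝ → ℝ := fun x =>
  if x ≤ 1/10 then 8*x else if x < 1/5 then 2*x + 3/5 else fiveXmod1 x

noncomputable def fEx3 : ℝ → ℝ := fun x => if x < 3/5 then 30/31 else 65/62

theorem ENNReal.ofReal_add_ofReal_one_sub {a : ℝ} (ha : a ∈ Icc (0:ℝ) 1) :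
    ENNReal.ofReal a + ENNReal.ofReal (1 - a) = 1 := by
  rw [← ENNReal.ofReal_add ha.1 (sub_nonneg.2 ha.2), add_sub_cancel, ENNReal.ofReal_one]

section RandomMap

variable {α : Type*} {p : α → ℝ}

theorem randomMap_integrand_le {τ1 τ2 : α → α} {A B S1 S2 : Set α} {x : α}
    (hpx : p x ∈ Icc (0:ℝ) 1) (h1 : τ1 ⁻¹' A ⊆ B ∪ S1) (h2 : τ2 ⁻¹' A ⊆ B ∪ S2) :
    ENNReal.ofReal (p x) * A.indicator (fun _ => 1) (τ1 x)
        + ENNReal.ofReal (1 - p x) * A.indicator (fun _ => 1) (τ2 x)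
      ≤ B.indicator (fun _ => 1) x + S1.indicator (fun y => ENNReal.ofReal (p y)) x
        + S2.indicator (fun y => ENNReal.ofReal (1 - p y)) x := by
  by_cases hB : x ∈ B
  · calc _ ≤ ENNReal.ofReal (p x) * 1 + ENNReal.ofReal (1 - p x) * 1 := by
          gcongr <;> exact indicator_le_self' (fun _ _ => zero_le) _
      _ = 1 := by rw [mul_one, mul_one, ENNReal.ofReal_add_ofReal_one_sub hpx]
      _ ≤ _ := by rw [indicator_of_mem hB, add_assoc]; exact le_self_add
  · rw [indicator_of_notMem hB, zero_add]
    gcongr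
    · by_cases hA : τ1 x ∈ A
      · simp [hA, indicator_of_mem ((h1 hA).resolve_left hB)]
      · simp [hA]
    · by_cases hA : τ2 x ∈ A
      · simp [hA, indicator_of_mem ((h2 hA).resolve_left hB)]
      · simp [hA]

variable [MeasurableSpace α] {μ : Measure α}

theorem setLIntegral_ofReal_add_ofReal_one_sub (hp : Measurable p) {S : Set α}
    (hp01 : ∀ᵐ x ∂μ.restrict S, p x ∈ Icc (0:ℝ) 1) :
    ∫⁻ x in S, ENNReal.ofReal (p x) ∂μ + ∫⁻ x in S, ENNReal.ofReal (1 - p x) ∂μ = μ S := by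
  rw [← lintegral_add_left hp.ennreal_ofReal, ← setLIntegral_one]
  exact lintegral_congr_ae (hp01.mono fun x hx => ENNReal.ofReal_add_ofReal_one_sub hx)

theorem setLIntegral_ofReal_one_sub_eq_zero (hp : Measurable p) {S : Set α}
    (hp01 : ∀ᵐ x ∂μ.restrict S, p x ∈ Icc (0:ℝ) 1) (hS : μ S ≠ ∞)
    (hle : μ S ≤ ∫⁻ x in S, ENNReal.ofReal (p x) ∂μ) :
    ∫⁻ x in S, ENNReal.ofReal (1 - p x) ∂μ = 0 := by
  have hsum := setLIntegral_ofReal_add_ofReal_one_sub hp hp01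
  have hfin : ∫⁻ x in S, ENNReal.ofReal (p x) ∂μ ≠ ∞ :=
    ne_top_of_le_ne_top hS (le_self_add.trans hsum.le)
  refine le_zero_iff.1 (ENNReal.le_of_add_le_add_left hfin ?_)
  rw [add_zero, hsum]
  exact hle

end RandomMap

theorem RMInvariant.measure_le {τ1 τ2 p : ℝ → ℝ} {μ : Measure ℝ}
    (hinv : RMInvariant τ1 τ2 p μ) (hp : Measurable p) (hp01 : ∀ᵐ x ∂μ, p x ∈ Icc (0:ℝ) 1)
    {A B S1 S2 : Set ℝ} (hA : MeasurableSet A) (hB : MeasurableSet B) (hS1 : MeasurableSet S1)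
    (hS2 : MeasurableSet S2) (h1 : τ1 ⁻¹' A ⊆ B ∪ S1) (h2 : τ2 ⁻¹' A ⊆ B ∪ S2) :
    μ A ≤ μ B + ∫⁻ x in S1, ENNReal.ofReal (p x) ∂μ
      + ∫⁻ x in S2, ENNReal.ofReal (1 - p x) ∂μ := calc
  μ A = ∫⁻ x, (ENNReal.ofReal (p x) * A.indicator (fun _ => 1) (τ1 x)
      + ENNReal.ofReal (1 - p x) * A.indicator (fun _ => 1) (τ2 x)) ∂μ := hinv A hA
  _ ≤ ∫⁻ x, (B.indicator (fun _ => 1) x + S1.indicator (fun y => ENNReal.ofReal (p y)) x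
      + S2.indicator (fun y => ENNReal.ofReal (1 - p y)) x) ∂μ :=
    lintegral_mono_ae (hp01.mono fun x hx => randomMap_integrand_le hx h1 h2)
  _ = _ := by
    rw [lintegral_add_right _ ((hp.const_sub 1).ennreal_ofReal.indicator hS2),
      lintegral_add_left (measurable_const.indicator hB), lintegral_indicator hB, setLIntegral_one,
      lintegral_indicator hS1, lintegral_indicator hS2]

theorem densMeasure_ae_mem_Icc (f : ℝ → ℝ) : ∀ᵐ x ∂densMeasure f, x ∈ Icc (0:ℝ) 1 :=
  (withDensity_absolutelyContinuous _ _).ae_le (ae_restrict_mem measurableSet_Icc)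

theorem densMeasure_Ico_of_eqOn {f : ℝ → ℝ} {a b c : ℝ} (ha : 0 ≤ a) (hb : b ≤ 1) (hc : 0 ≤ c)
    (hf : EqOn f (fun _ => c) (Ico a b)) :
    densMeasure f (Ico a b) = ENNReal.ofReal (c * (b - a)) := by
  have hsub : Ico a b ⊆ Icc 0 1 := fun x hx => ⟨ha.trans hx.1, hx.2.le.trans hb⟩
  rw [densMeasure, leb01, withDensity_apply _ measurableSet_Ico,
    Measure.restrict_restrict measurableSet_Ico, inter_eq_left.2 hsub,
    setLIntegral_congr_fun measurableSet_Ico fun x hx => congrArg ENNReal.ofReal (hf hx),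
    setLIntegral_const, Real.volume_Ico, ENNReal.ofReal_mul hc]

theorem densMeasure_fEx3_Ico_of_le {a b : ℝ} (ha : 0 ≤ a) (hb : b ≤ 3/5) :
    densMeasure fEx3 (Ico a b) = ENNReal.ofReal (30/31 * (b - a)) :=
  densMeasure_Ico_of_eqOn ha (by linarith) (by norm_num) fun x hx =>
    if_pos (hx.2.trans_le hb)

theorem densMeasure_fEx3_Ico_of_ge {a b : ℝ} (ha : 3/5 ≤ a) (hb : b ≤ 1) :
    densMeasure fEx3 (Ico a b) = ENNReal.ofReal (65/62 * (b - a)) :=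
  densMeasure_Ico_of_eqOn (by linarith) hb (by norm_num) fun x hx =>
    if_neg (ha.trans hx.1).not_gt

def fiveXmod1PreimageIco (a b : ℝ) : Set ℝ :=
  ⋃ k : Fin 4, Ico (((k : ℕ) + 1 + a) / 5) (((k : ℕ) + 1 + b) / 5)

theorem measurableSet_fiveXmod1PreimageIco (a b : ℝ) :
    MeasurableSet (fiveXmod1PreimageIco a b) :=
  MeasurableSet.iUnion fun _ => measurableSet_Ico

theorem fiveXmod1_preimage_Ico_subset (a b : ℝ) :
    fiveXmod1 ⁻¹' Ico a b ⊆ fiveXmod1PreimageIco a b := by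
  intro x hx
  simp only [mem_preimage, fiveXmod1] at hx
  simp only [fiveXmod1PreimageIco, mem_iUnion, mem_Ico]
  split_ifs at hx
  · exact ⟨0, by norm_num; constructor <;> linarith [hx.1, hx.2]⟩
  · exact ⟨1, by norm_num; constructor <;> linarith [hx.1, hx.2]⟩
  · exact ⟨2, by norm_num; constructor <;> linarith [hx.1, hx.2]⟩
  · exact ⟨3, by norm_num; constructor <;> linarith [hx.1, hx.2]⟩

theorem densMeasure_fEx3_fiveXmod1PreimageIco_le {a b : ℝ} (ha : 0 ≤ a) (hab : a ≤ b)
    (hb : b ≤ 1) :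
    densMeasure fEx3 (fiveXmod1PreimageIco a b) ≤ ENNReal.ofReal (25/31 * (b - a)) := by
  refine (measure_iUnion_fintype_le _ _).trans (le_of_eq ?_)
  simp only [Fin.sum_univ_four, Fin.isValue, Fin.coe_ofNat_eq_mod, Nat.reduceMod, Nat.cast_ofNat,
    Nat.cast_zero, Nat.cast_one]
  rw [densMeasure_fEx3_Ico_of_le (by linarith) (by linarith),
    densMeasure_fEx3_Ico_of_le (by linarith) (by linarith),
    densMeasure_fEx3_Ico_of_ge (by linarith) (by linarith),
    densMeasure_fEx3_Ico_of_ge (by linarith) (by linarith),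
    ← ENNReal.ofReal_add (by linarith) (by linarith),
    ← ENNReal.ofReal_add (by linarith) (by linarith),
    ← ENNReal.ofReal_add (by linarith) (by linarith)]
  congr 1
  ring

theorem tauLower_preimage_Ico_three_fifths :
    tauLower ⁻¹' Ico (3/5) (4/5) ⊆ fiveXmod1PreimageIco (3/5) (4/5) ∪ Ico (3/20) (7/40) := by
  intro x hx
  simp only [mem_preimage, tauLower] at hx
  split_ifs at hx
  · linarith [hx.1]
  · exact Or.inr ⟨by linarith [hx.1], by linarith [hx.2]⟩
  · exact Or.inl (fiveXmod1_preimage_Ico_subset _ _ hx)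

theorem tauUpper_preimage_Ico_three_fifths :
    tauUpper ⁻¹' Ico (3/5) (4/5) ⊆ fiveXmod1PreimageIco (3/5) (4/5) ∪ Ico (3/40) (1/10) := by
  intro x hx
  simp only [mem_preimage, tauUpper] at hx
  split_ifs at hx
  · exact Or.inr ⟨by linarith [hx.1], by linarith [hx.2]⟩
  · linarith [hx.2]
  · exact Or.inl (fiveXmod1_preimage_Ico_subset _ _ hx)

theorem tauLower_preimage_Ico_nine_tenths :
    tauLower ⁻¹' Ico (9/10) (19/20) ⊆
      fiveXmod1PreimageIco (9/10) (19/20) ∪ Ico (3/16) (31/160) := by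
  intro x hx
  simp only [mem_preimage, tauLower] at hx
  split_ifs at hx
  · linarith [hx.1]
  · exact Or.inr ⟨by linarith [hx.1], by linarith [hx.2]⟩
  · exact Or.inl (fiveXmod1_preimage_Ico_subset _ _ hx)

theorem tauUpper_preimage_Ico_nine_tenths :
    tauUpper ⁻¹' Ico (9/10) (19/20) ⊆ fiveXmod1PreimageIco (9/10) (19/20) ∪ Ico (3/20) (7/40) := by
  intro x hx
  simp only [mem_preimage, tauUpper] at hx
  split_ifs at hx
  · linarith [hx.1]
  · exact Or.inr ⟨by linarith [hx.1], by linarith [hx.2]⟩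
  · exact Or.inl (fiveXmod1_preimage_Ico_subset _ _ hx)

theorem RMInvariant.setLIntegral_ofReal_one_sub_Ico_eq_zero {p : ℝ → ℝ}
    (hinv : RMInvariant tauLower tauUpper p (densMeasure fEx3)) (hp : Measurable p)
    (hp01 : ∀ᵐ x ∂densMeasure fEx3, p x ∈ Icc (0:ℝ) 1) :
    ∫⁻ x in Ico (3/20) (7/40), ENNReal.ofReal (1 - p x) ∂densMeasure fEx3 = 0 := by
  set μ := densMeasure fEx3
  have hS : μ (Ico (3/20) (7/40)) = ENNReal.ofReal (30/31 * (7/40 - 3/20)) :=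
    densMeasure_fEx3_Ico_of_le (by norm_num) (by norm_num)
  refine setLIntegral_ofReal_one_sub_eq_zero hp (ae_restrict_of_ae hp01)
    (hS ▸ ENNReal.ofReal_ne_top) ?_
  have hA := hinv.measure_le hp hp01 measurableSet_Ico (measurableSet_fiveXmod1PreimageIco _ _)
    measurableSet_Ico measurableSet_Ico tauLower_preimage_Ico_three_fifths
    tauUpper_preimage_Ico_three_fifths
  have hB := densMeasure_fEx3_fiveXmod1PreimageIco_le (a := 3/5) (b := 4/5)
    (by norm_num) (by norm_num) (by norm_num)
  have hS2 : ∫⁻ x in Ico (3/40) (1/10), ENNReal.ofReal (1 - p x) ∂μ ≤ μ (Ico (3/40) (1/10)) :=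
    le_add_self.trans (setLIntegral_ofReal_add_ofReal_one_sub hp (ae_restrict_of_ae hp01)).le
  rw [densMeasure_fEx3_Ico_of_ge (by norm_num) (by norm_num)] at hA
  rw [densMeasure_fEx3_Ico_of_le (by norm_num) (by norm_num)] at hS2
  rw [hS]
  refine ENNReal.le_of_add_le_add_left (a := ENNReal.ofReal (5/31 + 3/124))
    ENNReal.ofReal_ne_top ?_
  calc ENNReal.ofReal (5/31 + 3/124) + ENNReal.ofReal (30/31 * (7/40 - 3/20))
      = ENNReal.ofReal (65/62 * (4/5 - 3/5)) := by
        rw [← ENNReal.ofReal_add (by norm_num) (by norm_num)]; norm_num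
    _ ≤ _ := hA
    _ ≤ ENNReal.ofReal (25/31 * (4/5 - 3/5))
        + ∫⁻ x in Ico (3/20) (7/40), ENNReal.ofReal (p x) ∂μ
        + ENNReal.ofReal (30/31 * (1/10 - 3/40)) := by gcongr
    _ = _ := by
        rw [add_right_comm, ← ENNReal.ofReal_add (by norm_num) (by norm_num)]; norm_num

/-- (Example 3 of the paper.)  The invariant density
`f = (30/31)·1_{[0,3/5)} + (65/62)·1_{[3/5,1]}` of the selector of Example 3 cannot be
achieved by any position dependent random map `{τ1, τ2; p, 1−p}` on the boundary maps. -/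
theorem no_probability_achieves_selector_density :
    ¬ ∃ p : ℝ → ℝ, Measurable p ∧ (∀ x ∈ Set.Icc (0:ℝ) 1, p x ∈ Set.Icc (0:ℝ) 1) ∧
      RMInvariant tauLower tauUpper p (densMeasure fEx3) := by
  rintro ⟨p, hp, hp01, hinv⟩
  set μ := densMeasure fEx3
  have hpμ : ∀ᵐ x ∂μ, p x ∈ Icc (0:ℝ) 1 := (densMeasure_ae_mem_Icc fEx3).mono hp01
  have hA := hinv.measure_le hp hpμ measurableSet_Ico (measurableSet_fiveXmod1PreimageIco _ _)
    measurableSet_Ico measurableSet_Ico tauLower_preimage_Ico_nine_tenths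
    tauUpper_preimage_Ico_nine_tenths
  rw [hinv.setLIntegral_ofReal_one_sub_Ico_eq_zero hp hpμ, add_zero] at hA
  have hB := densMeasure_fEx3_fiveXmod1PreimageIco_le (a := 9/10) (b := 19/20)
    (by norm_num) (by norm_num) (by norm_num)
  have hT : ∫⁻ x in Ico (3/16) (31/160), ENNReal.ofReal (p x) ∂μ ≤ μ (Ico (3/16) (31/160)) :=
    le_self_add.trans (setLIntegral_ofReal_add_ofReal_one_sub hp (ae_restrict_of_ae hpμ)).le
  have := hA.trans (add_le_add hB hT)
  rw [densMeasure_fEx3_Ico_of_ge (by norm_num) (by norm_num),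
    densMeasure_fEx3_Ico_of_le (by norm_num) (by norm_num),
    ← ENNReal.ofReal_add (by norm_num) (by norm_num),
    ENNReal.ofReal_le_ofReal_iff (by norm_num)] at this
  norm_num at this
end

section
/- Define τ1, τ2 : [0,1] → [0,1] by: τ1(x) = 2x on [0, 1/10], τ1(x) = 8x − 3/5 on (1/10, 1/5), τ2(x) = 8x on [0, 1/10], τ2(x) = 2x + 3/5 on (1/10, 1/5), and, for both k = 1,2, τ_k(x) = 5x − 1 on [1/5, 2/5), 5x − 2 on [2/5, 3/5), 5x − 3 on [3/5, 4/5), 5x − 4 on [4/5, 1] (i.e. τ_k(x) = 5x mod 1 on [1/5,1]). Let p : [0,1] → [0,1] be any Borel measurable function with p(x) = 1/5 for x ∈ [0, 1/10) and p(x) = 4/5 for x ∈ [1/10, 1/5] (p arbitrary on (1/5, 1]). Then Lebesgue measure λ_Leb on [0,1] is invariant under the position-dependent random map R = {τ1, τ2; p, 1−p}; consequently the random map on the boundary maps has the same invariant density f ≡ 1 as the selector 𝝉(x) = 5x mod 1. -/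
open MeasureTheory Set Filter
open scoped ENNReal

/-!
On `[1/5, 1]` both boundary maps are the four full branches of `5x mod 1`; there the weights
`p` and `1 - p` add up to one, and each branch pulls `λ(A)` back with factor `1/5`, so this part
contributes `(4/5) λ(A)`. On `[0, 1/5)` the four affine branches `2x`, `8x` (on `[0, 1/10)`) and
`8x - 3/5`, `2x + 3/5` (on `[1/10, 1/5)`) all have weight `probability / slope = 1/10`, and their
images tile `[0, 1)` twice, which contributes the missing `(1/5) λ(A)`.
-/
namespace MeasureTheory

variable {α : Type*} [LinearOrder α] [MeasurableSpace α] [TopologicalSpace α]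
  [OrderClosedTopology α] [OpensMeasurableSpace α] {μ : Measure α} {a b c : α}

theorem Measure.restrict_Ico_add_restrict_Ico (hab : a ≤ b) (hbc : b ≤ c) :
    μ.restrict (Ico a b) + μ.restrict (Ico b c) = μ.restrict (Ico a c) := by
  rw [← Measure.restrict_union Ico_disjoint_Ico_same measurableSet_Ico,
    Ico_union_Ico_eq_Ico hab hbc]

theorem measure_inter_Ico_add_measure_inter_Ico (A : Set α) (hab : a ≤ b) (hbc : b ≤ c) :
    μ (A ∩ Ico a b) + μ (A ∩ Ico b c) = μ (A ∩ Ico a c) := by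
  simpa only [Measure.add_apply, Measure.restrict_apply' measurableSet_Ico] using
    congrArg (· A) (Measure.restrict_Ico_add_restrict_Ico (μ := μ) hab hbc)

theorem setLIntegral_Ico_add_setLIntegral_Ico (f : α → ℝ≥0∞) (hab : a ≤ b) (hbc : b ≤ c) :
    ∫⁻ x in Ico a b, f x ∂μ + ∫⁻ x in Ico b c, f x ∂μ = ∫⁻ x in Ico a c, f x ∂μ := by
  rw [← lintegral_add_measure, Measure.restrict_Ico_add_restrict_Ico hab hbc]

end MeasureTheory

theorem Real.volume_preimage_affine {a : ℝ} (ha : a ≠ 0) (b : ℝ) (S : Set ℝ) :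
    volume ((a * · + b) ⁻¹' S) = ENNReal.ofReal |a⁻¹| * volume S := by
  rw [show (a * · + b) ⁻¹' S = (a * ·) ⁻¹' ((· + b) ⁻¹' S) from rfl,
    Real.volume_preimage_mul_left ha, measure_preimage_add_right]

theorem setLIntegral_indicator_comp_affine {A : Set ℝ} (hA : MeasurableSet A) {a : ℝ} (ha : 0 < a)
    (b c d : ℝ) :
    ∫⁻ x in Ico c d, A.indicator (fun _ => 1) (a * x + b)
      = ENNReal.ofReal a⁻¹ * volume (A ∩ Ico (a * c + b) (a * d + b)) := by
  have hf : Measurable (a * · + b) := by fun_prop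
  have hinj : Function.Injective (a * · + b) := fun x y h => by simpa [ha.ne'] using h
  have hind (x : ℝ) :
      A.indicator (fun _ => (1 : ℝ≥0∞)) (a * x + b) = ((a * · + b) ⁻¹' A).indicator 1 x :=
    (indicator_comp_right _).symm
  simp_rw [hind]
  rw [lintegral_indicator_one (hf hA), Measure.restrict_apply (hf hA), ← image_affine_Ico ha,
    ← abs_of_pos (inv_pos.2 ha), ← Real.volume_preimage_affine ha.ne', preimage_inter,
    preimage_image_eq _ hinj]

noncomputable def rmIntegrand (τ1 τ2 p : ℝ → ℝ) (A : Set ℝ) (x : ℝ) : ℝ≥0∞ :=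
  ENNReal.ofReal (p x) * A.indicator (fun _ => 1) (τ1 x)
    + ENNReal.ofReal (1 - p x) * A.indicator (fun _ => 1) (τ2 x)

theorem rmIntegrand_of_eq {τ1 τ2 p : ℝ → ℝ} {x : ℝ} (A : Set ℝ) (hτ : τ1 x = τ2 x)
    (hp : p x ∈ Icc 0 1) : rmIntegrand τ1 τ2 p A x = A.indicator (fun _ => 1) (τ1 x) := by
  rw [rmIntegrand, hτ, ← add_mul, ← ENNReal.ofReal_add hp.1 (sub_nonneg.2 hp.2), add_sub_cancel,
    ENNReal.ofReal_one, one_mul]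

theorem setLIntegral_rmIntegrand_of_affine {τ1 τ2 p : ℝ → ℝ} {A : Set ℝ} (hA : MeasurableSet A)
    {c d t a₁ b₁ a₂ b₂ : ℝ} (ha₁ : 0 < a₁) (ha₂ : 0 < a₂) (hp : ∀ x ∈ Ico c d, p x = t)
    (hτ1 : ∀ x ∈ Ico c d, τ1 x = a₁ * x + b₁) (hτ2 : ∀ x ∈ Ico c d, τ2 x = a₂ * x + b₂) :
    ∫⁻ x in Ico c d, rmIntegrand τ1 τ2 p A x
      = ENNReal.ofReal (t / a₁) * volume (A ∩ Ico (a₁ * c + b₁) (a₁ * d + b₁))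
        + ENNReal.ofReal ((1 - t) / a₂) * volume (A ∩ Ico (a₂ * c + b₂) (a₂ * d + b₂)) := by
  have hind (a b : ℝ) : Measurable fun x => A.indicator (fun _ => (1 : ℝ≥0∞)) (a * x + b) :=
    (measurable_const.indicator hA).comp (by fun_prop)
  rw [setLIntegral_congr_fun measurableSet_Ico
      (fun x hx => by rw [rmIntegrand, hp x hx, hτ1 x hx, hτ2 x hx]),
    lintegral_add_left ((hind a₁ b₁).const_mul _), lintegral_const_mul _ (hind _ _),
    lintegral_const_mul _ (hind _ _), setLIntegral_indicator_comp_affine hA ha₁,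
    setLIntegral_indicator_comp_affine hA ha₂, ← mul_assoc, ← mul_assoc,
    ← ENNReal.ofReal_mul' (inv_nonneg.2 ha₁.le), ← ENNReal.ofReal_mul' (inv_nonneg.2 ha₂.le),
    div_eq_mul_inv, div_eq_mul_inv]

theorem setLIntegral_indicator_fiveXmod1 {A : Set ℝ} (hA : MeasurableSet A) :
    ∫⁻ x in Ico (1/5) 1, A.indicator (fun _ => 1) (fiveXmod1 x)
      = ENNReal.ofReal (4/5) * volume (A ∩ Ico 0 1) := by
  have branch {c d k : ℝ} (hc : 5 * c - k = 0) (hd : 5 * d - k = 1)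
      (hk : ∀ x ∈ Ico c d, fiveXmod1 x = 5 * x - k) :
      ∫⁻ x in Ico c d, A.indicator (fun _ => 1) (fiveXmod1 x)
        = ENNReal.ofReal 5⁻¹ * volume (A ∩ Ico 0 1) := by
    rw [setLIntegral_congr_fun measurableSet_Ico (fun x hx => by rw [hk x hx, sub_eq_add_neg]),
      setLIntegral_indicator_comp_affine hA (by norm_num), ← sub_eq_add_neg, ← sub_eq_add_neg,
      hc, hd]
  rw [← setLIntegral_Ico_add_setLIntegral_Ico _ (by norm_num : (1/5 : ℝ) ≤ 2/5) (by norm_num),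
    ← setLIntegral_Ico_add_setLIntegral_Ico _ (by norm_num : (2/5 : ℝ) ≤ 3/5) (by norm_num),
    ← setLIntegral_Ico_add_setLIntegral_Ico _ (by norm_num : (3/5 : ℝ) ≤ 4/5) (by norm_num)]
  rw [branch (k := 1) (by norm_num) (by norm_num)
      (fun x ⟨h₀, h₁⟩ => by unfold fiveXmod1; split_ifs <;> linarith),
    branch (k := 2) (by norm_num) (by norm_num)
      (fun x ⟨h₀, h₁⟩ => by unfold fiveXmod1; split_ifs <;> linarith),
    branch (k := 3) (by norm_num) (by norm_num)
      (fun x ⟨h₀, h₁⟩ => by unfold fiveXmod1; split_ifs <;> linarith),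
    branch (k := 4) (by norm_num) (by norm_num)
      (fun x ⟨h₀, h₁⟩ => by unfold fiveXmod1; split_ifs <;> linarith)]
  simp only [← add_mul]
  rw [← ENNReal.ofReal_add, ← ENNReal.ofReal_add, ← ENNReal.ofReal_add] <;> norm_num

theorem setLIntegral_rmIntegrand_Ico_zero_fifth {p : ℝ → ℝ} {A : Set ℝ} (hA : MeasurableSet A)
    (hp1 : ∀ x ∈ Ico (0:ℝ) (1/10), p x = 1/5) (hp2 : ∀ x ∈ Ico (1/10 : ℝ) (1/5), p x = 4/5) :
    ∫⁻ x in Ico 0 (1/5), rmIntegrand tauLower tauUpper p A x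
      = ENNReal.ofReal (1/5) * volume (A ∩ Ico 0 1) := by
  have hleft := setLIntegral_rmIntegrand_of_affine (τ1 := tauLower) (τ2 := tauUpper) hA
    (a₁ := 2) (b₁ := 0) (a₂ := 8) (b₂ := 0) (by norm_num) (by norm_num) hp1
    (fun x ⟨h₀, h₁⟩ => by unfold tauLower; split_ifs <;> linarith)
    (fun x ⟨h₀, h₁⟩ => by unfold tauUpper; split_ifs <;> linarith)
  have hright := setLIntegral_rmIntegrand_of_affine (τ1 := tauLower) (τ2 := tauUpper) hA
    (a₁ := 8) (b₁ := -3/5) (a₂ := 2) (b₂ := 3/5) (by norm_num) (by norm_num) hp2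
    (fun x ⟨h₀, h₁⟩ => by unfold tauLower; split_ifs <;> linarith)
    (fun x ⟨h₀, h₁⟩ => by unfold tauUpper; split_ifs <;> linarith)
  calc ∫⁻ x in Ico 0 (1/5), rmIntegrand tauLower tauUpper p A x
      = (∫⁻ x in Ico 0 (1/10), rmIntegrand tauLower tauUpper p A x)
        + ∫⁻ x in Ico (1/10) (1/5), rmIntegrand tauLower tauUpper p A x :=
        (setLIntegral_Ico_add_setLIntegral_Ico _ (by norm_num) (by norm_num)).symm
    _ = ENNReal.ofReal (1/10) * (volume (A ∩ Ico 0 (1/5)) + volume (A ∩ Ico (1/5) 1))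
        + ENNReal.ofReal (1/10) * (volume (A ∩ Ico 0 (4/5)) + volume (A ∩ Ico (4/5) 1)) := by
        rw [hleft, hright]; norm_num; ring
    _ = (ENNReal.ofReal (1/10) + ENNReal.ofReal (1/10)) * volume (A ∩ Ico 0 1) := by
        rw [measure_inter_Ico_add_measure_inter_Ico A (by norm_num) (by norm_num),
          measure_inter_Ico_add_measure_inter_Ico A (by norm_num) (by norm_num), add_mul]
    _ = ENNReal.ofReal (1/5) * volume (A ∩ Ico 0 1) := by
        rw [← ENNReal.ofReal_add] <;> norm_num

theorem setLIntegral_rmIntegrand_Ico_fifth_one {p : ℝ → ℝ} {A : Set ℝ} (hA : MeasurableSet A)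
    (hp01 : ∀ x ∈ Ico (1/5 : ℝ) 1, p x ∈ Icc 0 1) :
    ∫⁻ x in Ico (1/5) 1, rmIntegrand tauLower tauUpper p A x
      = ENNReal.ofReal (4/5) * volume (A ∩ Ico 0 1) := by
  rw [← setLIntegral_indicator_fiveXmod1 hA]
  refine setLIntegral_congr_fun measurableSet_Ico fun x ⟨h₀, h₁⟩ => ?_
  have hlower : tauLower x = fiveXmod1 x := by
    unfold tauLower; split_ifs <;> first | rfl | linarith
  have hupper : tauUpper x = fiveXmod1 x := by
    unfold tauUpper; split_ifs <;> first | rfl | linarith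
  rw [rmIntegrand_of_eq A (hlower.trans hupper.symm) (hp01 x ⟨h₀, h₁⟩), hlower]

theorem random_map_example2_preserves_lebesgue_general
    (p : ℝ → ℝ)
    (hp01 : ∀ x ∈ Set.Icc (0:ℝ) 1, p x ∈ Set.Icc (0:ℝ) 1)
    (hp1 : ∀ x ∈ Set.Ico (0:ℝ) (1/10), p x = 1/5)
    (hp2 : ∀ x ∈ Set.Icc (1/10 : ℝ) (1/5), p x = 4/5) :
    RMInvariant tauLower tauUpper p leb01 := by
  intro A hA
  show leb01 A = ∫⁻ x, rmIntegrand tauLower tauUpper p A x ∂leb01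
  have hleb : leb01 = volume.restrict (Ico 0 1) := (Measure.restrict_congr_set Ico_ae_eq_Icc).symm
  have hp2' : ∀ x ∈ Ico (1/10 : ℝ) (1/5), p x = 4/5 := fun x hx => hp2 x (Ico_subset_Icc_self hx)
  have hp01' : ∀ x ∈ Ico (1/5 : ℝ) 1, p x ∈ Icc 0 1 := fun x ⟨h₀, h₁⟩ => hp01 x ⟨by linarith, h₁.le⟩
  rw [hleb, Measure.restrict_apply' measurableSet_Ico,
    ← setLIntegral_Ico_add_setLIntegral_Ico _ (by norm_num : (0:ℝ) ≤ 1/5) (by norm_num),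
    setLIntegral_rmIntegrand_Ico_zero_fifth hA hp1 hp2',
    setLIntegral_rmIntegrand_Ico_fifth_one hA hp01', ← add_mul,
    ← ENNReal.ofReal_add (by norm_num) (by norm_num)]
  norm_num

/-- (Example 2 of the paper.)  For any measurable probability function
`p` equal to `1/5` on `[0, 1/10)` and to `4/5` on `[1/10, 1/5]` (arbitrary elsewhere),
Lebesgue measure on `[0,1]` — the invariant density `f ≡ 1` of the selector
`𝝉(x) = 5x mod 1` — is invariant under the random map `R = {τ1, τ2; p, 1−p}`. -/
theorem random_map_example2_preserves_lebesgue
    (p : ℝ → ℝ) (hpm : Measurable p)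
    (hp01 : ∀ x ∈ Set.Icc (0:ℝ) 1, p x ∈ Set.Icc (0:ℝ) 1)
    (hp1 : ∀ x ∈ Set.Ico (0:ℝ) (1/10), p x = 1/5)
    (hp2 : ∀ x ∈ Set.Icc (1/10 : ℝ) (1/5), p x = 4/5) :
    RMInvariant tauLower tauUpper p leb01 :=
  random_map_example2_preserves_lebesgue_general p hp01 hp1 hp2
end
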